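/- arXiv:1903.05060 — 8 statements merged into one kernel-verified Lean document; each statement's English description precedes it below -/
import Mathlib

section
/- Let m and p be positive integers, l = 4mp + 2p − 1 and t = 4mp − 1, so that p' = (l−1)/2 = (2m+1)p − 1. Then for every j with 1 ≤ j ≤ p': σ_j = 1 if j mod (2m+1) lies in {1, 2, …, m}, and σ_j = −1 if j mod (2m+1) lies in {0} ∪ {m+1, …, 2m}. -/
/-- `σ_j = (-1)^{⌊(2j-1)t/l⌋}`. -/
def sigmaF (l t j : ℕ) : ℤ := (-1) ^ ((2 * j - 1) * t / l)

/-- `r(j)`: the unique integer with `r(j) ≡ (2j-1)t (mod 2l)` and `-l < r(j) < l`. -/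
def rF (l t j : ℕ) : ℤ :=
  if (((2 * j - 1) * t : ℕ) : ℤ) % (2 * l) < l then (((2 * j - 1) * t : ℕ) : ℤ) % (2 * l)
  else (((2 * j - 1) * t : ℕ) : ℤ) % (2 * l) - 2 * l

/-- `r'(j) = (|r(j)| + 1)/2`. -/
def rpF (l t j : ℕ) : ℤ := (|rF l t j| + 1) / 2

/-! Since `t = l - 2p` and `l + 1 = 2p(2m + 1)`, writing `j = (2m + 1)q + s` gives
`(2j - 1)t = (2j - 1 - 2q)l - e` with `e = 2p(2s - 1) + 2q`, so `⌊(2j - 1)t/l⌋ = 2j - 1 - 2q - c`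
where `c = ⌈e/l⌉`, and `σ_j = (-1)^(c + 1)`. As `0 ≤ q < p`, `c` is `0` for `s = 0`,
`1` for `1 ≤ s ≤ m` and `2` for `m < s ≤ 2m`. -/

theorem Int.ediv_eq_sub_of_add_eq_mul {n e a c l : ℤ} (h : n + e = a * l)
    (hlo : (c - 1) * l < e) (hhi : e ≤ c * l) : n / l = a - c := by
  have hl : 0 < l := by linarith
  rw [Int.ediv_eq_iff_of_pos hl]
  constructor <;> linarith

theorem sigmaF_eq_neg_one_pow_of_bounds {m p l t q s j : ℕ} (c : ℕ)
    (hl : (l : ℤ) + 1 = 2 * p * (2 * m + 1)) (ht : (t : ℤ) + 2 * p = l)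
    (hj : j = (2 * m + 1) * q + s) (hj1 : 1 ≤ j)
    (hlo : ((c : ℤ) - 1) * l < 2 * p * (2 * s - 1) + 2 * q)
    (hhi : 2 * p * (2 * (s : ℤ) - 1) + 2 * q ≤ c * l) :
    sigmaF l t j = (-1) ^ (c + 1) := by
  -- `(2j - 1)t = (2j - 1)l - 2p(2j - 1)` and `4pj = 2q(l + 1) + 4ps`.
  have hkey : (((2 * j - 1) * t : ℕ) : ℤ) + (2 * p * (2 * s - 1) + 2 * q)
      = (2 * j - 1 - 2 * q) * l := by
    have hjZ : (j : ℤ) = (2 * m + 1) * q + s := by exact_mod_cast hj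
    push_cast [Nat.cast_sub (by omega : 1 ≤ 2 * j)]
    linear_combination (2 * (j : ℤ) - 1) * ht + 2 * (q : ℤ) * hl - 4 * (p : ℤ) * hjZ
  have hdiv := Int.ediv_eq_sub_of_add_eq_mul hkey hlo hhi
  rw [sigmaF, ← Int.coe_negOnePow_natCast, ← Int.coe_negOnePow_natCast, Int.natCast_div, hdiv]
  congr 1
  rw [Int.negOnePow_eq_iff]
  exact ⟨(j : ℤ) - q - 1 - c, by push_cast; ring⟩

theorem stmt2 (m p l t p' : ℕ) (hm : 1 ≤ m) (hp : 1 ≤ p)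
    (hl : l = 4*m*p + 2*p - 1) (ht : t = 4*m*p - 1) (hp' : p' = (2*m+1)*p - 1) :
    ∀ j : ℕ, 1 ≤ j → j ≤ p' →
      sigmaF l t j =
        if 1 ≤ j % (2*m+1) ∧ j % (2*m+1) ≤ m then 1 else -1 := by
  have hmp : 1 ≤ m * p := Nat.one_le_iff_ne_zero.2 (by positivity)
  have hlZ : (l : ℤ) + 1 = 2 * p * (2 * m + 1) := by
    subst hl; push_cast [Nat.cast_sub (by nlinarith : 1 ≤ 4 * m * p + 2 * p)]; ring
  have htZ : (t : ℤ) + 2 * p = l := by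
    subst hl ht; push_cast [Nat.cast_sub (by nlinarith : 1 ≤ 4 * m * p + 2 * p),
      Nat.cast_sub (by nlinarith : 1 ≤ 4 * m * p)]; ring
  intro j hj1 hj2
  have hq : j / (2 * m + 1) < p := by
    rw [Nat.div_lt_iff_lt_mul (by omega)]
    have : 1 ≤ (2 * m + 1) * p := by nlinarith
    rw [mul_comm]; omega
  have hj := (Nat.div_add_mod j (2 * m + 1)).symm
  have hs := Nat.mod_lt j (by omega : 2 * m + 1 > 0)
  set q := j / (2 * m + 1)
  set s := j % (2 * m + 1)
  have hqZ : (q : ℤ) < p := by exact_mod_cast hq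
  rcases Nat.eq_zero_or_pos s with hs0 | hs1
  · rw [sigmaF_eq_neg_one_pow_of_bounds 0 hlZ htZ hj hj1 (by push_cast [hs0]; nlinarith)
      (by push_cast [hs0]; nlinarith)]
    simp [hs0]
  rcases le_or_gt s m with hsm | hsm
  · rw [sigmaF_eq_neg_one_pow_of_bounds 1 hlZ htZ hj hj1 (by push_cast; nlinarith)
      (by push_cast; nlinarith)]
    simp [hs1.ne', hsm]
  · rw [sigmaF_eq_neg_one_pow_of_bounds 2 hlZ htZ hj hj1 (by push_cast; nlinarith)
      (by push_cast; nlinarith)]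
    simp [hsm]
end

section
/- Let m and p be positive integers, l = 4mp + 2p − 1 and t = 4mp − 1, so that p' = (2m+1)p − 1. Partition {1,…,p'} into the intervals I_a, where I_a = {(a−1)p+1, …, ap} for 1 ≤ a ≤ 2m and I_{2m+1} = {2mp+1, …, (2m+1)p−1}. Then for k ∈ I_a: if a is odd, i_k = (2m+1)(k−1) + m + 1 − ((a−1)/2)·(2(2m+1)p − 1), and if a is even, i_k = (2m+1)(2p−k) + m + ((a−2)/2)·(2(2m+1)p − 1). -/
/-! Since `(2m+1)·t = m·2l - 1`, the inverse of `t` modulo `2l` is `-(2m+1)`. So `r'(j) = k`,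
i.e. `r(j) = ±(2k-1)`, determines `2j-1` modulo `2l` up to sign as `(2m+1)(2k-1)`. The stated
`i_k` is the index whose `2i_k-1` is the representative of that class lying in `(0, l)`: in an
odd block `2i_k-1 = (2m+1)(2k-1) - ((a-1)/2)·2l`, in an even block
`2i_k-1 = (a/2)·2l - (2m+1)(2k-1)`.
Two numbers in `(0, l)` that agree up to sign modulo `2l` are equal. -/

section
variable {l t j : ℕ}

lemma rF_modEq (hj : 1 ≤ j) : rF l t j ≡ (2 * j - 1) * t [ZMOD 2 * l] := by
  have hcast : (((2 * j - 1) * t : ℕ) : ℤ) = (2 * j - 1) * t := by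
    push_cast [Nat.cast_sub (by omega : 1 ≤ 2 * j)]; ring
  have hmod := Int.mod_modEq (((2 * j - 1) * t : ℕ) : ℤ) (2 * l)
  rw [← hcast]
  unfold rF
  split_ifs
  · exact hmod
  · exact (Int.modEq_iff_dvd.mpr ⟨1, by ring⟩).trans hmod

lemma odd_rF (ht : Odd (t : ℤ)) (hj : 1 ≤ j) : Odd (rF l t j) := by
  have hodd : Odd ((2 * j - 1) * t : ℤ) := Odd.mul ⟨j - 1, by ring⟩ ht
  rw [Int.odd_iff] at hodd ⊢
  rw [((rF_modEq hj).of_mul_right l).eq, hodd]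

lemma abs_rF_eq_of_rpF_eq (hodd : Odd (rF l t j)) {k : ℤ} (h : rpF l t j = k) :
    |rF l t j| = 2 * k - 1 := by
  obtain ⟨c, hc⟩ := hodd
  unfold rpF at h
  rcases abs_choice (rF l t j) with e | e <;> rw [e] at h ⊢ <;> omega

lemma eq_of_abs_rF_eq (hcop : IsCoprime (2 * l : ℤ) t) (hj : 1 ≤ j) (hjl : 2 * j ≤ l)
    {J y : ℤ} (hJ : 1 ≤ J) (hJl : 2 * J ≤ l) (hy : (2 * J - 1) * t ≡ y [ZMOD 2 * l])
    (h : |rF l t j| = |y|) : (j : ℤ) = J := by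
  have hr := rF_modEq (l := l) (t := t) hj
  rcases abs_eq_abs.mp h with e | e <;> rw [e] at hr
  · have hdvd : (2 * l : ℤ) ∣ t * ((2 * j - 1) - (2 * J - 1)) := by
      convert (hy.trans hr).dvd using 1; ring
    have hzero := Int.eq_zero_of_abs_lt_dvd (hcop.dvd_of_dvd_mul_left hdvd)
      (abs_lt.mpr ⟨by linarith, by linarith⟩)
    linarith
  · have hdvd : (2 * l : ℤ) ∣ t * ((2 * j - 1) + (2 * J - 1)) := by
      convert (hy.neg.trans hr).dvd using 1; ring
    have hzero := Int.eq_zero_of_abs_lt_dvd (hcop.dvd_of_dvd_mul_left hdvd)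
      (abs_lt.mpr ⟨by linarith, by linarith⟩)
    linarith

end

/-- The claimed `i_k` for `k` in the block `I_{2b+1}`. -/
def blockIndexOdd (m p b k : ℤ) : ℤ :=
  (2 * m + 1) * (k - 1) + m + 1 - b * (2 * (2 * m + 1) * p - 1)

/-- The claimed `i_k` for `k` in the block `I_{2b+2}`. -/
def blockIndexEven (m p b k : ℤ) : ℤ :=
  (2 * m + 1) * (2 * p - k) + m + b * (2 * (2 * m + 1) * p - 1)

section
variable {m p b k : ℤ}

lemma blockIndexOdd_modEq :
    (2 * blockIndexOdd m p b k - 1) * (4 * m * p - 1) ≡ -(2 * k - 1)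
      [ZMOD 2 * (4 * m * p + 2 * p - 1)] :=
  Int.modEq_iff_dvd.mpr ⟨b * (4 * m * p - 1) - m * (2 * k - 1), by unfold blockIndexOdd; ring⟩

lemma blockIndexEven_modEq :
    (2 * blockIndexEven m p b k - 1) * (4 * m * p - 1) ≡ 2 * k - 1
      [ZMOD 2 * (4 * m * p + 2 * p - 1)] :=
  Int.modEq_iff_dvd.mpr
    ⟨m * (2 * k - 1) - (b + 1) * (4 * m * p - 1), by unfold blockIndexEven; ring⟩

lemma blockIndexOdd_mem (hb : 0 ≤ b) (hbm : b ≤ m) (hk1 : 2 * b * p + 1 ≤ k)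
    (hk2 : k ≤ (2 * b + 1) * p) (hkp : k ≤ (2 * m + 1) * p - 1) :
    1 ≤ blockIndexOdd m p b k ∧ 2 * blockIndexOdd m p b k ≤ 4 * m * p + 2 * p - 1 := by
  unfold blockIndexOdd
  constructor
  · nlinarith
  · rcases hbm.eq_or_lt with rfl | hbm <;> nlinarith

lemma blockIndexEven_mem (hb : 0 ≤ b) (hbm : b + 1 ≤ m) (hk1 : (2 * b + 1) * p + 1 ≤ k)
    (hk2 : k ≤ (2 * b + 2) * p) :
    1 ≤ blockIndexEven m p b k ∧ 2 * blockIndexEven m p b k ≤ 4 * m * p + 2 * p - 1 := by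
  unfold blockIndexEven
  constructor <;> nlinarith

end

theorem stmt3 (m p l t p' : ℕ) (hm : 1 ≤ m) (hp : 1 ≤ p)
    (hl : l = 4*m*p + 2*p - 1) (ht : t = 4*m*p - 1) (hp' : p' = (2*m+1)*p - 1)
    (a k : ℕ) (ha1 : 1 ≤ a) (ha2 : a ≤ 2*m+1)
    (hk1 : (a-1)*p + 1 ≤ k) (hk2 : k ≤ min (a*p) p')
    (j : ℕ) (hj1 : 1 ≤ j) (hj2 : j ≤ p') (hrj : rpF l t j = (k : ℤ)) :
    (j : ℤ) =
      if a % 2 = 1 then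
        (2*(m:ℤ)+1) * ((k:ℤ) - 1) + (m:ℤ) + 1 - (((a:ℤ) - 1)/2) * (2*(2*(m:ℤ)+1)*(p:ℤ) - 1)
      else
        (2*(m:ℤ)+1) * (2*(p:ℤ) - (k:ℤ)) + (m:ℤ) + (((a:ℤ) - 2)/2) * (2*(2*(m:ℤ)+1)*(p:ℤ) - 1) := by
  have hL : (l : ℤ) = 4 * m * p + 2 * p - 1 := by
    rw [hl, Nat.cast_pred (by positivity)]; push_cast; ring
  have hT : (t : ℤ) = 4 * m * p - 1 := by
    rw [ht, Nat.cast_pred (by positivity)]; push_cast; ring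
  have hP : (p' : ℤ) = (2 * m + 1) * p - 1 := by
    rw [hp', Nat.cast_pred (by positivity)]; push_cast; ring
  obtain ⟨hka, hkp⟩ := le_min_iff.mp hk2
  have hcop : IsCoprime (2 * l : ℤ) t := ⟨m, -(2 * m + 1), by rw [hL, hT]; ring⟩
  have habs : |rF l t j| = 2 * k - 1 :=
    abs_rF_eq_of_rpF_eq (odd_rF ⟨2 * m * p - 1, by rw [hT]; ring⟩ hj1) hrj
  have hjl : 2 * j ≤ l := by zify; nlinarith
  have hkp' : (k : ℤ) ≤ (2 * m + 1) * p - 1 := by rw [← hP]; exact_mod_cast hkp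
  obtain ⟨b, rfl | rfl⟩ : ∃ b, a = 2 * b + 1 ∨ a = 2 * b + 2 := ⟨(a - 1) / 2, by omega⟩
  · rw [if_pos (by omega), show ((2 * b + 1 : ℕ) - 1 : ℤ) / 2 = b by omega]
    obtain ⟨h1, h2⟩ := blockIndexOdd_mem (m := m) (p := p) (b := b) (k := k) (by positivity)
      (by omega) (by push_cast at hk1; exact_mod_cast hk1) (by exact_mod_cast hka) hkp'
    refine eq_of_abs_rF_eq hcop hj1 hjl h1 (hL ▸ h2) (hL ▸ hT ▸ blockIndexOdd_modEq) ?_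
    rw [habs, abs_neg, abs_of_pos (by omega)]
  · rw [if_neg (by omega), show ((2 * b + 2 : ℕ) - 2 : ℤ) / 2 = b by omega]
    obtain ⟨h1, h2⟩ := blockIndexEven_mem (m := m) (p := p) (b := b) (k := k) (by positivity)
      (by omega) (by push_cast at hk1; exact_mod_cast hk1) (by exact_mod_cast hka)
    refine eq_of_abs_rF_eq hcop hj1 hjl h1 (hL ▸ h2) (hL ▸ hT ▸ blockIndexEven_modEq) ?_
    rw [habs, abs_of_pos (by omega)]
end

section
/- Let m and p be positive integers, l = 4mp + 2p − 1 and t = 4mp − 1, so that p' = (2m+1)p − 1. Then for every k with 1 ≤ k ≤ p': σ_{i_k} = −1 if ⌈k/p⌉ is odd, and σ_{i_k} = 1 if ⌈k/p⌉ is even. -/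
theorem sigmaF_eq_ite_rF_nonneg {l : ℕ} (hl : 0 < l) (t j : ℕ) :
    sigmaF l t j = if 0 ≤ rF l t j then 1 else -1 := by
  set N := (2 * j - 1) * t
  have hN : ((N : ℕ) : ℤ) % (2 * l) = ((N % (l * 2) : ℕ) : ℤ) := by push_cast; rw [mul_comm]
  have hlt : N % (l * 2) < l * 2 := Nat.mod_lt _ (by omega)
  have hpar : N / l % 2 = N % (l * 2) / l := (Nat.mod_mul_right_div_self N l 2).symm
  rw [sigmaF, neg_one_pow_eq_pow_mod_two, hpar, rF, hN]
  by_cases hs : N % (l * 2) < l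
  · have hs' : ((N % (l * 2) : ℕ) : ℤ) < l := by exact_mod_cast hs
    rw [Nat.div_eq_of_lt hs, if_pos hs', if_pos (by positivity), pow_zero]
  · have hs' : ¬((N % (l * 2) : ℕ) : ℤ) < l := by exact_mod_cast hs
    have hlt' : ((N % (l * 2) : ℕ) : ℤ) < 2 * l := by
      exact_mod_cast (by omega : N % (l * 2) < 2 * l)
    rw [Nat.div_eq_of_lt_le (k := 1) (by omega) (by omega), if_neg hs', if_neg (by omega),
      pow_one]

theorem rF_eq_of_modEq {l t j : ℕ} (hj : 1 ≤ j) {R : ℤ}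
    (hR : R ≡ (2 * j - 1) * t [ZMOD 2 * l]) (hR₁ : -l < R) (hR₂ : R < l) : rF l t j = R := by
  have hN : ((2 * j - 1) * t : ℕ) % (2 * (l : ℤ)) = R % (2 * l) := by
    rw [hR]; push_cast [Nat.cast_sub (by omega : 1 ≤ 2 * j)]; rfl
  rw [rF, hN]
  rcases le_or_gt 0 R with hR₀ | hR₀
  · rw [Int.emod_eq_of_lt hR₀ (by omega), if_pos hR₂]
  · rw [← Int.add_emod_right, Int.emod_eq_of_lt (by omega) (by omega), if_neg (by omega)]
    ring

theorem add_sub_one_div_eq_of_add_eq_mul {p k e c : ℕ} (he : e < p) (hk : k + e = p * c) :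
    (k + p - 1) / p = c :=
  Nat.div_eq_of_lt_le (by rw [mul_comm]; omega) (by rw [add_mul, mul_comm]; omega)

theorem rF_mul_add_add_one {m p l t a b : ℕ} (hl : (l : ℤ) = 4 * m * p + 2 * p - 1)
    (ht : (t : ℤ) = 4 * m * p - 1) (ha : a < p) (hb : b ≤ 2 * m)
    (hj : (2 * m + 1) * a + b + 2 ≤ (2 * m + 1) * p) :
    rF l t ((2 * m + 1) * a + b + 1) = 4 * p * ((m : ℤ) - b) - 2 * a - 1 := by
  have hbound : a + p * (2 * b + 1) + 1 < 4 * m * p + 2 * p := by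
    rcases hb.lt_or_eq with hb | rfl
    · nlinarith
    · have : a + 1 < p := by nlinarith
      nlinarith
  refine rF_eq_of_modEq (by omega) (Int.modEq_iff_dvd.2 ⟨(2 * m + 1) * a + b - a, ?_⟩) ?_ ?_
  · push_cast
    rw [ht, hl]
    ring
  · rw [hl]; linarith
  · rw [hl]; nlinarith

theorem ite_nonneg_eq_ite_odd_ceil {p a k : ℕ} (n : ℤ) (ha : a < p)
    (hk : (|4 * p * n - 2 * a - 1| + 1) / 2 = k) :
    (if 0 ≤ 4 * p * n - 2 * a - 1 then (1 : ℤ) else -1) =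
      if (k + p - 1) / p % 2 = 1 then -1 else 1 := by
  rcases lt_or_ge 0 n with hn | hn
  · obtain ⟨u, rfl⟩ : ∃ u : ℕ, n = u + 1 := ⟨(n - 1).toNat, by omega⟩
    have hpos : 0 < 4 * p * ((u : ℤ) + 1) - 2 * a - 1 := by nlinarith
    have hdouble : 4 * p * ((u : ℤ) + 1) - 2 * a - 1 + 1 = 2 * (2 * p * (u + 1) - a) := by ring
    rw [abs_of_pos hpos, hdouble, Int.mul_ediv_cancel_left _ two_ne_zero] at hk
    have hk' : k + a = p * (2 * (u + 1)) := by zify; linarith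
    rw [if_pos hpos.le, add_sub_one_div_eq_of_add_eq_mul ha hk', if_neg (by omega)]
  · obtain ⟨w, rfl⟩ : ∃ w : ℕ, n = -w := ⟨(-n).toNat, by omega⟩
    have hneg : 4 * p * -(w : ℤ) - 2 * a - 1 < 0 := by nlinarith
    have hdouble : -(4 * p * -(w : ℤ) - 2 * a - 1) + 1 = 2 * (2 * p * w + a + 1) := by ring
    rw [abs_of_neg hneg, hdouble, Int.mul_ediv_cancel_left _ two_ne_zero] at hk
    have hk' : k + (p - 1 - a) = p * (2 * w + 1) := by
      have : k = 2 * (p * w) + a + 1 := by zify; linarith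
      rw [mul_add, mul_one, mul_left_comm]; omega
    rw [if_neg (not_le.2 hneg), add_sub_one_div_eq_of_add_eq_mul (by omega) hk',
      if_pos (by omega)]

theorem stmt4_general (m p l t p' : ℕ) (hm : 1 ≤ m) (hp : 1 ≤ p)
    (hl : l = 4*m*p + 2*p - 1) (ht : t = 4*m*p - 1) (hp' : p' = (2*m+1)*p - 1)
    (k : ℕ)
    (j : ℕ) (hj1 : 1 ≤ j) (hj2 : j ≤ p') (hrj : rpF l t j = (k : ℤ)) :
    sigmaF l t j = if ((k + p - 1) / p) % 2 = 1 then -1 else 1 := by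
  have hmp : 1 ≤ m * p := Nat.mul_le_mul hm hp
  have hlZ : (l : ℤ) = 4 * m * p + 2 * p - 1 := by rw [hl]; push_cast [mul_assoc]; omega
  have htZ : (t : ℤ) = 4 * m * p - 1 := by rw [ht]; push_cast [mul_assoc]; omega
  obtain ⟨a, b, rfl, hb⟩ : ∃ a b, j = (2 * m + 1) * a + b + 1 ∧ b ≤ 2 * m :=
    ⟨(j - 1) / (2 * m + 1), (j - 1) % (2 * m + 1),
      by have := Nat.div_add_mod (j - 1) (2 * m + 1); omega,
      Nat.le_of_lt_succ (Nat.mod_lt _ (by omega))⟩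
  have hj : (2 * m + 1) * a + b + 2 ≤ (2 * m + 1) * p := by omega
  have ha : a < p := Nat.lt_of_mul_lt_mul_left (a := 2 * m + 1) (by omega)
  have hr := rF_mul_add_add_one hlZ htZ ha hb hj
  rw [rpF, hr] at hrj
  rw [sigmaF_eq_ite_rF_nonneg (by omega), hr]
  exact ite_nonneg_eq_ite_odd_ceil _ ha hrj

theorem stmt4 (m p l t p' : ℕ) (hm : 1 ≤ m) (hp : 1 ≤ p)
    (hl : l = 4*m*p + 2*p - 1) (ht : t = 4*m*p - 1) (hp' : p' = (2*m+1)*p - 1)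
    (k : ℕ) (hk1 : 1 ≤ k) (hk2 : k ≤ p')
    (j : ℕ) (hj1 : 1 ≤ j) (hj2 : j ≤ p') (hrj : rpF l t j = (k : ℤ)) :
    sigmaF l t j = if ((k + p - 1) / p) % 2 = 1 then -1 else 1 :=
  stmt4_general m p l t p' hm hp hl ht hp' k j hj1 hj2 hrj
end

section
/- Let m and p be positive integers, l = 4mp + 2p − 1 and t = 4mp − 1, so that p' = (2m+1)p − 1. Then: (i) for 1 ≤ k ≤ p', σ_{i_k} + σ_{i_{p'+1−k}} = 2 if ip + 1 ≤ k ≤ (i+1)p − 1 for some i ∈ {1, 3, …, 2m−1}; σ_{i_k} + σ_{i_{p'+1−k}} = −2 if ip + 1 ≤ k ≤ (i+1)p − 1 for some i ∈ {0, 2, …, 2m}; and σ_{i_k} + σ_{i_{p'+1−k}} = 0 if k = ip for some i ∈ {1, 2, …, 2m}. (ii) For 1 ≤ j ≤ p' − 1, σ_{j+1} + σ_{p'+1−j} = −2 if j ≡ m (mod 2m+1), and σ_{j+1} + σ_{p'+1−j} = 0 otherwise. -/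
theorem neg_one_pow_eq_of_mod_two_eq {a b : ℕ} (h : a % 2 = b % 2) : (-1 : ℤ) ^ a = (-1) ^ b :=
  neg_one_pow_congr (by rw [Nat.even_iff, Nat.even_iff, h])

theorem neg_one_pow_eq_neg_of_add_mod_two_eq_one {a b : ℕ} (h : (a + b) % 2 = 1) :
    (-1 : ℤ) ^ a = -(-1) ^ b := by
  rw [← mul_neg_one ((-1 : ℤ) ^ b), ← pow_succ]
  exact neg_one_pow_eq_of_mod_two_eq (by omega)

section Quotients

variable {l t j q r : ℕ}

theorem sigmaF_eq_of_mul_eq (h : (2 * j - 1) * t = q * l + r) (hr : r < l) :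
    sigmaF l t j = (-1) ^ q := by
  rw [sigmaF, h, Nat.div_eq_of_lt_le (k := q) (by omega) (by rw [add_one_mul]; omega)]

theorem abs_rF_eq_of_mul_eq (h : (2 * j - 1) * t = q * l + r) (hr : r < l) :
    |rF l t j| = if Even q then (r : ℤ) else l - r := by
  obtain ⟨Q, rfl | rfl⟩ := Nat.even_or_odd' q
  · have hmod : (2 * j - 1) * t % (2 * l) = r := by
      rw [h, show 2 * Q * l = 2 * l * Q by ring, Nat.mul_add_mod, Nat.mod_eq_of_lt (by omega)]
    have hmod' : (((2 * j - 1) * t : ℕ) : ℤ) % (2 * l) = r := by exact_mod_cast hmod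
    simp only [rF, hmod', if_pos (show (r : ℤ) < l by exact_mod_cast hr),
      if_pos (even_two_mul Q), abs_of_nonneg (Int.natCast_nonneg r)]
  · have hmod : (2 * j - 1) * t % (2 * l) = l + r := by
      rw [h, show (2 * Q + 1) * l + r = 2 * l * Q + (l + r) by ring, Nat.mul_add_mod,
        Nat.mod_eq_of_lt (by omega)]
    have hmod' : (((2 * j - 1) * t : ℕ) : ℤ) % (2 * l) = l + r := by exact_mod_cast hmod
    rw [rF, hmod', if_neg (by omega), if_neg (Nat.not_even_iff_odd.2 (odd_two_mul_add_one Q)),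
      abs_of_nonpos (by omega)]
    ring

end Quotients

section Residue

variable {N p l t : ℕ}

theorem pos_of_add_one_eq_mul (hl : l + 1 = N * (2 * p)) : 0 < N :=
  Nat.pos_of_ne_zero (by rintro rfl; simp at hl)

variable {n a b : ℕ}

theorem mul_two_mul_eq (hl : l + 1 = N * (2 * p)) (hn : n = N * a + b) :
    n * (2 * p) = a * l + (a + 2 * b * p) := by
  subst hn; linear_combination a * hl.symm

theorem mul_residue_eq (hl : l + 1 = N * (2 * p)) (hn : n = N * a + b) :
    N * (a + 2 * b * p) = b * l + n := by
  subst hn; linear_combination b * hl.symm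

theorem residue_pos (hl : l + 1 = N * (2 * p)) (hn : n = N * a + b) (hn0 : 0 < n) :
    0 < a + 2 * b * p := by
  have h := mul_residue_eq hl hn
  exact Nat.pos_of_ne_zero fun h0 => by rw [h0] at h; omega

theorem residue_lt (hl : l + 1 = N * (2 * p)) (hn : n = N * a + b) (hb : b < N) (hnl : n < l) :
    a + 2 * b * p < l := by
  have hbl : b * l + n < N * l := by nlinarith
  exact Nat.lt_of_mul_lt_mul_left (mul_residue_eq hl hn ▸ hbl)

theorem mul_t_add_residue (hl : l + 1 = N * (2 * p)) (ht : t + 2 * p = l) (hn : n = N * a + b) :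
    n * t + (a + 2 * b * p) + a * l = n * l := by
  linear_combination n * ht - mul_two_mul_eq hl hn

theorem sigmaF_eq_and_abs_rF_eq (hl : l + 1 = N * (2 * p)) (ht : t + 2 * p = l) {j : ℕ}
    (hj : 1 ≤ j) (hjl : 2 * j - 1 < l) (hn : 2 * j - 1 = N * a + b) (hb : b < N) :
    sigmaF l t j = (-1) ^ a ∧
      |rF l t j| = if Even a then (l : ℤ) - (a + 2 * b * p : ℕ) else (a + 2 * b * p : ℕ) := by
  have hc0 := residue_pos hl hn (by omega)
  have hcl := residue_lt hl hn hb hjl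
  have hnt := mul_t_add_residue hl ht hn
  have han : a < 2 * j - 1 := Nat.lt_of_mul_lt_mul_right (a := l) (by omega)
  obtain ⟨q, hq⟩ : ∃ q, 2 * j - 1 = q + a + 1 := ⟨2 * j - 1 - a - 1, by omega⟩
  have hexpand : (2 * j - 1) * l = q * l + l + a * l := by rw [hq]; ring
  have hmul : (2 * j - 1) * t = q * l + (l - (a + 2 * b * p)) := by omega
  have hqa : q % 2 = a % 2 := by omega
  refine ⟨?_, ?_⟩
  · rw [sigmaF_eq_of_mul_eq hmul (by omega)]
    exact neg_one_pow_eq_of_mod_two_eq hqa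
  · rw [abs_rF_eq_of_mul_eq hmul (by omega)]
    have hiff : Even q ↔ Even a := by rw [Nat.even_iff, Nat.even_iff, hqa]
    by_cases ha : Even a
    · rw [if_pos (hiff.2 ha), if_pos ha]; push_cast [hcl.le]; ring
    · rw [if_neg (mt hiff.1 ha), if_neg ha]; push_cast [hcl.le]; ring

theorem sigmaF_eq_neg_one_pow_div (hl : l + 1 = N * (2 * p)) (ht : t + 2 * p = l) {j : ℕ}
    (hj : 1 ≤ j) (hjl : 2 * j - 1 < l) : sigmaF l t j = (-1) ^ ((2 * j - 1) / N) :=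
  (sigmaF_eq_and_abs_rF_eq hl ht hj hjl (Nat.div_add_mod _ _).symm
    (Nat.mod_lt _ (pos_of_add_one_eq_mul hl))).1

theorem two_mul_sub_one_eq_of_rpF_eq {j k x : ℕ} (hk : rpF l t j = k) (hx : |rF l t j| = x)
    (hodd : x % 2 = 1) : 2 * k - 1 = x := by
  rw [rpF, hx] at hk; omega

theorem sigmaF_eq_of_rpF_eq (hl : l + 1 = N * (2 * p)) (ht : t + 2 * p = l) (hN : Odd N)
    {j k : ℕ} (hj : 1 ≤ j) (hjl : 2 * j - 1 < l) (hk : rpF l t j = k) :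
    sigmaF l t j = -(-1) ^ (N * (2 * k - 1) / l) := by
  set n := 2 * j - 1
  set a := n / N
  set b := n % N
  have hN0 := pos_of_add_one_eq_mul hl
  have hn : n = N * a + b := (Nat.div_add_mod n N).symm
  have hb : b < N := Nat.mod_lt n hN0
  obtain ⟨hσ, hr⟩ := sigmaF_eq_and_abs_rF_eq hl ht hj hjl hn hb
  set c := a + 2 * b * p with hc
  have hNc : N * c = b * l + n := mul_residue_eq hl hn
  have hcl : c < l := residue_lt hl hn hb hjl
  have hca : c % 2 = a % 2 := by rw [hc, mul_assoc]; omega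
  have hlodd : l % 2 = 1 := by
    have : l + 1 = 2 * (N * p) := by rw [hl]; ring
    omega
  have hab : (a + b) % 2 = 1 := by
    obtain ⟨M, hM⟩ := hN
    have : n = 2 * (M * a) + a + b := by rw [hn, hM]; ring
    omega
  rw [hσ]
  by_cases ha : Even a
  · rw [if_pos ha] at hr
    rw [Nat.even_iff] at ha
    have h2k : 2 * k - 1 = l - c :=
      two_mul_sub_one_eq_of_rpF_eq hk (by rw [hr]; push_cast [hcl.le]; ring) (by omega)
    have hsplit : N * (l - c) + N * c = N * l := by rw [← mul_add, Nat.sub_add_cancel hcl.le]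
    have hNl : N * l = (N - 1 - b) * l + b * l + l := by
      rw [← add_mul, ← add_one_mul, show N - 1 - b + b + 1 = N by omega]
    have hfl : N * (2 * k - 1) / l = N - 1 - b := by
      rw [h2k]
      exact Nat.div_eq_of_lt_le (by omega) (by rw [add_one_mul]; omega)
    rw [hfl, ← neg_one_pow_eq_neg_of_add_mod_two_eq_one]
    rw [Nat.odd_iff] at hN
    omega
  · rw [if_neg ha] at hr
    rw [Nat.not_even_iff] at ha
    have h2k : 2 * k - 1 = c := two_mul_sub_one_eq_of_rpF_eq hk hr (by omega)
    have hfl : N * (2 * k - 1) / l = b := by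
      rw [h2k]
      exact Nat.div_eq_of_lt_le (by omega) (by rw [add_one_mul]; omega)
    rw [hfl, ← neg_one_pow_eq_neg_of_add_mod_two_eq_one hab]

end Residue

section Blocks

variable {N p l b : ℕ}

theorem mul_two_mul_sub_one_div_eq (hl : l + 1 = N * (2 * p)) (hb : b < N) {k : ℕ}
    (h1 : b * p + 1 ≤ k) (h2 : k + 1 ≤ (b + 1) * p) : N * (2 * k - 1) / l = b := by
  apply Nat.div_eq_of_lt_le
  · have : N * (2 * (b * p) + 1) ≤ N * (2 * k - 1) := Nat.mul_le_mul_left N (by omega)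
    nlinarith
  · have : N * (2 * k - 1 + 3) ≤ N * (2 * ((b + 1) * p)) := Nat.mul_le_mul_left N (by omega)
    nlinarith

theorem mul_two_mul_sub_one_div_eq_of_add_eq (hl : l + 1 = N * (2 * p)) (hb : b < N) {k k' : ℕ}
    (h1 : b * p + 1 ≤ k) (h2 : k + 1 ≤ (b + 1) * p) (hk : k + k' = N * p) :
    N * (2 * k' - 1) / l = N - 1 - b := by
  have e1 : (N - 1 - b) * p + (b + 1) * p = N * p := by rw [← add_mul]; congr 1; omega
  have e2 : (N - 1 - b + 1) * p + b * p = N * p := by rw [← add_mul]; congr 1; omega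
  exact mul_two_mul_sub_one_div_eq hl (by omega) (by omega) (by omega)

theorem mul_two_mul_mul_sub_one_div_eq (hl : l + 1 = N * (2 * p)) (hb1 : 1 ≤ b) (hb : b < N) :
    N * (2 * (b * p) - 1) / l = b - 1 := by
  have hp : 1 ≤ p := Nat.pos_of_ne_zero (by rintro rfl; simp at hl)
  have hbp : 1 ≤ b * p := Nat.mul_pos hb1 hp
  have e : N * (2 * (b * p) - 1) + N = b * (l + 1) := by
    rw [← Nat.mul_add_one, Nat.sub_add_cancel (by omega), hl]; ring
  apply Nat.div_eq_of_lt_le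
  · have : 2 * N ≤ l + 1 := by rw [hl]; nlinarith
    have : (b - 1) * l + l = b * l := by rw [← add_one_mul, Nat.sub_add_cancel hb1]
    nlinarith
  · rw [Nat.sub_add_cancel hb1]
    nlinarith

end Blocks

theorem neg_one_pow_div_add_neg_one_pow_div {N P x y : ℕ} (hN : 0 < N) (hP : Even P)
    (h : x + y = N * P) :
    (-1 : ℤ) ^ (x / N) + (-1) ^ (y / N) = if N ∣ x then 2 * (-1) ^ (x / N) else 0 := by
  have hsum : (x + y) / N = P := by rw [h, Nat.mul_div_cancel_left _ hN]
  rw [Nat.even_iff] at hP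
  split_ifs with hx
  · rw [Nat.add_div_of_dvd_right hx] at hsum
    rw [neg_one_pow_eq_of_mod_two_eq (a := y / N) (b := x / N) (by omega)]
    ring
  · have hx0 : 0 < x % N := Nat.pos_of_ne_zero (mt Nat.dvd_of_mod_eq_zero hx)
    have hdvd : N ∣ x % N + y % N := by
      rw [Nat.dvd_iff_mod_eq_zero, ← Nat.add_mod, h, Nat.mul_mod_right]
    rw [Nat.add_div_eq_of_le_mod_add_mod (Nat.le_of_dvd (by omega) hdvd) hN] at hsum
    rw [neg_one_pow_eq_neg_of_add_mod_two_eq_one (a := x / N) (b := y / N) (by omega)]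
    ring

theorem dvd_two_mul_add_one_iff {m j : ℕ} : 2 * m + 1 ∣ 2 * j + 1 ↔ j % (2 * m + 1) = m := by
  have hN : 2 * m + 1 ≡ 0 [MOD 2 * m + 1] := Nat.modEq_zero_iff_dvd.2 dvd_rfl
  suffices 2 * m + 1 ∣ 2 * j + 1 ↔ j ≡ m [MOD 2 * m + 1] by
    rw [this, Nat.ModEq, Nat.mod_eq_of_lt (show m < 2 * m + 1 by omega)]
  constructor
  · intro h
    have h2 : 2 * j + 1 ≡ 2 * m + 1 [MOD 2 * m + 1] := (Nat.modEq_zero_iff_dvd.2 h).trans hN.symm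
    exact Nat.ModEq.cancel_left_of_coprime (Nat.coprime_two_right.2 (odd_two_mul_add_one m))
      (Nat.ModEq.add_right_cancel' 1 h2)
  · intro h
    exact Nat.modEq_zero_iff_dvd.1 (((h.mul_left 2).add_right 1).trans hN)

section Pairs

variable {N p l t p' : ℕ} {I : ℕ → ℕ}

theorem sigmaF_I_eq (hl : l + 1 = N * (2 * p)) (ht : t + 2 * p = l) (hN : Odd N)
    (hp' : p' + 1 = N * p)
    (hI : ∀ k : ℕ, 1 ≤ k → k ≤ p' → 1 ≤ I k ∧ I k ≤ p' ∧ rpF l t (I k) = (k : ℤ))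
    {k : ℕ} (hk1 : 1 ≤ k) (hk2 : k ≤ p') : sigmaF l t (I k) = -(-1) ^ (N * (2 * k - 1) / l) := by
  obtain ⟨hI1, hI2, hIk⟩ := hI k hk1 hk2
  have : N * (2 * p) = 2 * (N * p) := by ring
  exact sigmaF_eq_of_rpF_eq hl ht hN hI1 (by omega) hIk

theorem sigmaF_I_add_sigmaF_I_of_mem_block (hl : l + 1 = N * (2 * p)) (ht : t + 2 * p = l)
    (hN : Odd N) (hp' : p' + 1 = N * p)
    (hI : ∀ k : ℕ, 1 ≤ k → k ≤ p' → 1 ≤ I k ∧ I k ≤ p' ∧ rpF l t (I k) = (k : ℤ))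
    {k i : ℕ} (hi : i < N) (hk1 : i * p + 1 ≤ k) (hk2 : k + 1 ≤ (i + 1) * p) :
    sigmaF l t (I k) + sigmaF l t (I (p' + 1 - k)) = -(-1) ^ i - (-1) ^ (N - 1 - i) := by
  have : (i + 1) * p ≤ N * p := Nat.mul_le_mul_right p hi
  rw [sigmaF_I_eq hl ht hN hp' hI (by omega) (by omega),
    sigmaF_I_eq hl ht hN hp' hI (k := p' + 1 - k) (by omega) (by omega),
    mul_two_mul_sub_one_div_eq hl hi hk1 hk2,
    mul_two_mul_sub_one_div_eq_of_add_eq hl hi hk1 hk2 (by omega)]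
  ring

theorem sigmaF_I_add_sigmaF_I_of_boundary (hl : l + 1 = N * (2 * p)) (ht : t + 2 * p = l)
    (hN : Odd N) (hp' : p' + 1 = N * p)
    (hI : ∀ k : ℕ, 1 ≤ k → k ≤ p' → 1 ≤ I k ∧ I k ≤ p' ∧ rpF l t (I k) = (k : ℤ))
    {i : ℕ} (hi1 : 1 ≤ i) (hi : i < N) :
    sigmaF l t (I (i * p)) + sigmaF l t (I (p' + 1 - i * p)) = 0 := by
  have hp : p ≠ 0 := by rintro rfl; simp at hl
  have hip : 1 ≤ i * p := Nat.mul_pos hi1 (Nat.pos_of_ne_zero hp)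
  have hiN : i * p < N * p := Nat.mul_lt_mul_of_pos_right hi (by omega)
  have hrefl : p' + 1 - i * p = (N - i) * p := by rw [Nat.sub_mul, hp']
  rw [sigmaF_I_eq hl ht hN hp' hI hip (by omega),
    sigmaF_I_eq hl ht hN hp' hI (k := p' + 1 - i * p) (by omega) (by omega), hrefl,
    mul_two_mul_mul_sub_one_div_eq hl hi1 hi,
    mul_two_mul_mul_sub_one_div_eq hl (by omega) (by omega),
    neg_one_pow_eq_neg_of_add_mod_two_eq_one (a := i - 1) (b := N - i - 1)
      (by rw [Nat.odd_iff] at hN; omega)]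
  ring

theorem sigmaF_succ_add_sigmaF_reflect {m : ℕ} (hl : l + 1 = (2 * m + 1) * (2 * p))
    (ht : t + 2 * p = l) (hp' : p' + 1 = (2 * m + 1) * p) {j : ℕ} (hj1 : 1 ≤ j)
    (hj2 : j + 1 ≤ p') :
    sigmaF l t (j + 1) + sigmaF l t (p' + 1 - j) = if j % (2 * m + 1) = m then -2 else 0 := by
  have hlp : 2 * p' + 1 = l := by
    have : (2 * m + 1) * (2 * p) = 2 * ((2 * m + 1) * p) := by ring
    omega
  have hs1 := sigmaF_eq_neg_one_pow_div hl ht (j := j + 1) (by omega) (by omega)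
  have hs2 := sigmaF_eq_neg_one_pow_div hl ht (j := p' + 1 - j) (by omega) (by omega)
  rw [show 2 * (j + 1) - 1 = 2 * j + 1 by omega] at hs1
  rw [show 2 * (p' + 1 - j) - 1 = l - 2 * j by omega] at hs2
  rw [hs1, hs2, neg_one_pow_div_add_neg_one_pow_div (by omega) (even_two_mul p)
    (show 2 * j + 1 + (l - 2 * j) = (2 * m + 1) * (2 * p) by omega)]
  simp only [dvd_two_mul_add_one_iff]
  split_ifs with hjm
  · have hdvd := Nat.mul_div_cancel' (dvd_two_mul_add_one_iff.2 hjm)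
    have hodd : Odd ((2 * j + 1) / (2 * m + 1)) :=
      (Nat.odd_mul.1 (hdvd ▸ odd_two_mul_add_one j)).2
    rw [hodd.neg_one_pow]
    norm_num
  · rfl

end Pairs

theorem stmt5 (m p l t p' : ℕ) (hm : 1 ≤ m) (hp : 1 ≤ p)
    (hl : l = 4*m*p + 2*p - 1) (ht : t = 4*m*p - 1) (hp' : p' = (2*m+1)*p - 1)
    (I : ℕ → ℕ)
    (hI : ∀ k : ℕ, 1 ≤ k → k ≤ p' → 1 ≤ I k ∧ I k ≤ p' ∧ rpF l t (I k) = (k : ℤ)) :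
    (∀ k i : ℕ, 1 ≤ k → k ≤ p' → i % 2 = 1 → i ≤ 2*m - 1 →
        i*p + 1 ≤ k → k ≤ (i+1)*p - 1 →
        sigmaF l t (I k) + sigmaF l t (I (p' + 1 - k)) = 2) ∧
    (∀ k i : ℕ, 1 ≤ k → k ≤ p' → i % 2 = 0 → i ≤ 2*m →
        i*p + 1 ≤ k → k ≤ (i+1)*p - 1 →
        sigmaF l t (I k) + sigmaF l t (I (p' + 1 - k)) = -2) ∧
    (∀ i : ℕ, 1 ≤ i → i ≤ 2*m →
        sigmaF l t (I (i*p)) + sigmaF l t (I (p' + 1 - i*p)) = 0) ∧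
    (∀ j : ℕ, 1 ≤ j → j ≤ p' - 1 →
        sigmaF l t (j+1) + sigmaF l t (p' + 1 - j) =
          if j % (2*m+1) = m then -2 else 0) := by
  have hmp : 1 ≤ m * p := Nat.mul_pos hm hp
  have hl' : l + 1 = (2 * m + 1) * (2 * p) := by
    have : (2 * m + 1) * (2 * p) = 4 * (m * p) + 2 * p := by ring
    rw [hl, show 4 * m * p = 4 * (m * p) by ring]; omega
  have ht' : t + 2 * p = l := by
    rw [hl, ht, show 4 * m * p = 4 * (m * p) by ring]; omega
  have hp'' : p' + 1 = (2 * m + 1) * p := by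
    have : (2 * m + 1) * p = 2 * (m * p) + p := by ring
    omega
  have hN := odd_two_mul_add_one m
  refine ⟨fun k i _ _ hodd hi hk1 hk2 => ?_, fun k i _ _ heven hi hk1 hk2 => ?_,
    fun i hi1 hi2 => sigmaF_I_add_sigmaF_I_of_boundary hl' ht' hN hp'' hI hi1 (by omega),
    fun j hj1 hj2 => sigmaF_succ_add_sigmaF_reflect hl' ht' hp'' hj1 (by omega)⟩
  · rw [sigmaF_I_add_sigmaF_I_of_mem_block hl' ht' hN hp'' hI (by omega) hk1 (by omega),
      Odd.neg_one_pow (Nat.odd_iff.2 hodd), Odd.neg_one_pow (Nat.odd_iff.2 (by omega))]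
    norm_num
  · rw [sigmaF_I_add_sigmaF_I_of_mem_block hl' ht' hN hp'' hI (by omega) hk1 (by omega),
      Even.neg_one_pow (Nat.even_iff.2 heven), Even.neg_one_pow (Nat.even_iff.2 (by omega))]
    norm_num
end

section
/- Let m and p be positive integers, l = 4mp + 2p + 1 and t = 4mp + 1, so that p' = (l−1)/2 = (2m+1)p. Then for every j with 1 ≤ j ≤ p': σ_j = 1 if j mod (2m+1) lies in {1, 2, …, m+1}, and σ_j = −1 if j mod (2m+1) lies in {0} ∪ {m+2, …, 2m}. -/
lemma sigmaF_eq_ite (l t j : ℕ) :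
    sigmaF l t j = if Even ((2 * j - 1) * t / l) then 1 else -1 :=
  neg_one_pow_eq_ite

/-- Since `2pn ≡ -1 (mod l)` and `t ≡ -2p (mod l)`, writing `j = na + s` gives
`(2j - 1)t = l(2(j - a - 1) + 1) + 2a - 2p(2s - 1)`, and the first summand contributes an odd
number to the quotient. -/
lemma even_mul_div_iff_odd {l t n p a s j : ℕ} (hl : l = 2 * p * n + 1) (ht : t + 2 * p = l)
    (hj : j = n * a + s) (hj1 : 1 ≤ j) :
    Even ((2 * j - 1) * t / l) ↔ Odd ((2 * a - 2 * p * (2 * s - 1) : ℤ) / l) := by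
  have hdec : (((2 * j - 1) * t : ℕ) : ℤ)
      = l * (2 * ((j : ℤ) - a - 1) + 1) + (2 * a - 2 * p * (2 * s - 1)) := by
    have hj' : ((2 * j - 1 : ℕ) : ℤ) = 2 * (n * a + s) - 1 := by push_cast [hj] at hj1 ⊢; omega
    have ht' : (t : ℤ) = l - 2 * p := by omega
    rw [Nat.cast_mul, hj', ht', hj, hl]
    push_cast
    ring
  have hquot : (((2 * j - 1) * t / l : ℕ) : ℤ)
      = (2 * a - 2 * p * (2 * s - 1) : ℤ) / l + 1 + 2 * ((j : ℤ) - a - 1) := by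
    rw [Int.natCast_div, hdec, Int.mul_add_ediv_left _ _ (by omega)]
    ring
  rw [← Int.even_coe_nat, hquot]
  simp [Int.even_add]

lemma odd_ediv_iff {m p l a s : ℕ} (hm : 1 ≤ m) (hl : l = 2 * p * (2 * m + 1) + 1)
    (hs : s < 2 * m + 1) (hsp : (2 * m + 1) * a + s ≤ (2 * m + 1) * p) :
    Odd ((2 * a - 2 * p * (2 * s - 1) : ℤ) / l) ↔ 1 ≤ s ∧ s ≤ m + 1 := by
  have hl0 : (0 : ℤ) < l := by omega
  rcases Nat.eq_zero_or_pos s with rfl | hs0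
  · have ha : a ≤ p := Nat.le_of_mul_le_mul_left hsp (by omega)
    have hq : (2 * a - 2 * p * (2 * (0 : ℕ) - 1) : ℤ) / l = 0 := by
      rw [Int.ediv_eq_iff_of_pos hl0]; push_cast [hl]; constructor <;> nlinarith
    rw [hq]
    simp
  have ha : a < p := Nat.lt_of_mul_lt_mul_left (a := 2 * m + 1) (by omega)
  rcases le_or_gt s (m + 1) with hsm | hsm
  · have hq : (2 * a - 2 * p * (2 * s - 1) : ℤ) / l = -1 := by
      rw [Int.ediv_eq_iff_of_pos hl0]; push_cast [hl]; constructor <;> nlinarith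
    rw [hq]
    simp only [odd_neg_one, true_iff]
    omega
  · have hq : (2 * a - 2 * p * (2 * s - 1) : ℤ) / l = -2 := by
      rw [Int.ediv_eq_iff_of_pos hl0]; push_cast [hl]; constructor <;> nlinarith
    rw [hq]
    simp [hsm.not_ge]

theorem stmt6_general (m p l t p' : ℕ) (hm : 1 ≤ m)
    (hl : l = 4*m*p + 2*p + 1) (ht : t = 4*m*p + 1) (hp' : p' = (2*m+1)*p) :
    ∀ j : ℕ, 1 ≤ j → j ≤ p' →
      sigmaF l t j =
        if 1 ≤ j % (2*m+1) ∧ j % (2*m+1) ≤ m + 1 then 1 else -1 := by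
  intro j hj1 hjp
  have hj : j = (2 * m + 1) * (j / (2 * m + 1)) + j % (2 * m + 1) := (Nat.div_add_mod _ _).symm
  have hl' : l = 2 * p * (2 * m + 1) + 1 := by rw [hl]; ring
  rw [sigmaF_eq_ite]
  refine if_congr ?_ rfl rfl
  rw [even_mul_div_iff_odd hl' (by omega) hj hj1]
  exact odd_ediv_iff hm hl' (Nat.mod_lt _ (by omega)) (hj ▸ hp' ▸ hjp)

theorem stmt6 (m p l t p' : ℕ) (hm : 1 ≤ m) (hp : 1 ≤ p)
    (hl : l = 4*m*p + 2*p + 1) (ht : t = 4*m*p + 1) (hp' : p' = (2*m+1)*p) :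
    ∀ j : ℕ, 1 ≤ j → j ≤ p' →
      sigmaF l t j =
        if 1 ≤ j % (2*m+1) ∧ j % (2*m+1) ≤ m + 1 then 1 else -1 :=
  stmt6_general m p l t p' hm hl ht hp'
end

section
/- Let m and p be positive integers, l = 4mp + 2p + 1 and t = 4mp + 1, so that p' = (2m+1)p. Then for all integers n_1, …, n_{p'} (with n_0 = 0), a(n̄) = −Σ_{j=1}^{p−1} n_{(2m+1)j} − Σ_{j=1}^{p} n_{(2m+1)j−m} − p. -/
lemma key1 (m p a b : ℕ) (ha : a < p) (hb : b ≤ m) :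
    (2 * ((2*m+1)*a+b+1) - 1) * (4*m*p+1)
      = (4*m*p+2*p+1) * (4*a*m+2*b) + (4*p*(m-b)+2*a+1) := by
  obtain ⟨c, rfl⟩ : ∃ c, m = b + c := ⟨m - b, by omega⟩
  have h1 : 2 * ((2*(b+c)+1)*a+b+1) - 1 = 2*((2*(b+c)+1)*a) + 2*b + 1 := by omega
  have h2 : b + c - b = c := by omega
  rw [h1, h2]; ring

lemma key2 (m p a b : ℕ) (ha : a < p) (hb1 : m + 1 ≤ b) (hb2 : b ≤ 2*m) :
    (2 * ((2*m+1)*a+b+1) - 1) * (4*m*p+1)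
      = (4*m*p+2*p+1) * (4*a*m+2*b-1) + (2*p*(4*m+1-2*b)+2*a+2) := by
  obtain ⟨c, rfl⟩ : ∃ c, b = m + 1 + c := ⟨b - m - 1, by omega⟩
  have h1 : 2 * ((2*m+1)*a+(m+1+c)+1) - 1 = 2*((2*m+1)*a) + 2*m + 2*c + 3 := by omega
  have h2 : 4*a*m+2*(m+1+c)-1 = 4*a*m+2*m+2*c+1 := by omega
  obtain ⟨d, rfl⟩ : ∃ d, m = c + d + 1 := ⟨m - c - 1, by omega⟩
  have h4 : 4*((c+d+1))+1-2*((c+d+1)+1+c) = 2*d+1 := by omega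
  rw [h1, h2, h4]; ring

lemma sig_eq (m p a b : ℕ) (hp : 1 ≤ p) (ha : a < p) (hb : b ≤ 2*m) :
    sigmaF (4*m*p+2*p+1) (4*m*p+1) ((2*m+1)*a+b+1) = if b ≤ m then 1 else -1 := by
  unfold sigmaF
  by_cases hbm : b ≤ m
  · rw [key1 m p a b ha hbm]
    have hlt : 4*p*(m-b)+2*a+1 < 4*m*p+2*p+1 := by
      have h1 : 4*p*(m-b) ≤ 4*p*m := by
        have := Nat.sub_le m b
        nlinarith
      nlinarith
    rw [Nat.mul_add_div (by omega), Nat.div_eq_of_lt hlt]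
    simp only [if_pos hbm, Nat.add_zero]
    exact Even.neg_one_pow ⟨2*a*m+b, by ring⟩
  · push_neg at hbm
    rw [key2 m p a b ha hbm hb]
    have hlt : 2*p*(4*m+1-2*b)+2*a+2 < 4*m*p+2*p+1 := by
      have h1 : 4*m+1-2*b ≤ 2*m-1 := by omega
      have h2 : 2*p*(4*m+1-2*b) ≤ 2*p*(2*m-1) := Nat.mul_le_mul_left _ h1
      have h3 : 2*p*(2*m-1) + 2*p ≤ 4*m*p := by
        have h4 : 2*p*(2*m-1) + 2*p = 2*p*(2*m-1+1) := by ring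
        rw [h4]
        have h5 : 2*m-1+1 = 2*m := by omega
        rw [h5]; ring_nf; omega
      omega
    rw [Nat.mul_add_div (by omega), Nat.div_eq_of_lt hlt]
    simp only [if_neg (by omega : ¬ b ≤ m), Nat.add_zero]
    refine Odd.neg_one_pow ⟨2*a*m+b-1, ?_⟩
    have h0 : 4*a*m = 2*(2*a*m) := by ring
    omega

lemma rp_eq (m p a b : ℕ) (hp : 1 ≤ p) (ha : a < p) (hb : b ≤ 2*m) :
    rpF (4*m*p+2*p+1) (4*m*p+1) ((2*m+1)*a+b+1)
      = ((if b ≤ m then 2*p*(m-b)+a+1 else 2*p*(b-m)-a : ℕ) : ℤ) := by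
  unfold rpF rF
  by_cases hbm : b ≤ m
  · rw [if_pos hbm]
    obtain ⟨c, rfl⟩ : ∃ c, m = b + c := ⟨m - b, by omega⟩
    have hcc : b + c - b = c := by omega
    rw [hcc]
    have key := key1 (b+c) p a b ha (by omega)
    rw [hcc] at key
    have hlt : 4*p*c+2*a+1 < 4*(b+c)*p+2*p+1 := by nlinarith
    have key' : (2 * ((2*(b+c)+1)*a+b+1) - 1) * (4*(b+c)*p+1)
        = (4*p*c+2*a+1) + 2*(4*(b+c)*p+2*p+1)*(2*a*(b+c)+b) := by rw [key]; ring
    have hmod : (((2 * ((2*(b+c)+1)*a+b+1) - 1) * (4*(b+c)*p+1) : ℕ) : ℤ)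
        % (2 * ((4*(b+c)*p+2*p+1 : ℕ) : ℤ))
        = ((4*p*c+2*a+1 : ℕ) : ℤ) := by
      have hc2 : (((2 * ((2*(b+c)+1)*a+b+1) - 1) * (4*(b+c)*p+1) : ℕ) : ℤ)
          = ((4*p*c+2*a+1 : ℕ) : ℤ)
            + (2 * ((4*(b+c)*p+2*p+1 : ℕ) : ℤ)) * ((2*a*(b+c)+b : ℕ) : ℤ) := by
        exact_mod_cast congrArg (Nat.cast : ℕ → ℤ) key'
      rw [hc2, Int.add_mul_emod_self_left,
        Int.emod_eq_of_lt (by positivity) (by exact_mod_cast (by omega : (4*p*c+2*a+1 : ℕ) < 2*(4*(b+c)*p+2*p+1)))]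
    rw [hmod, if_pos (show ((4*p*c+2*a+1 : ℕ) : ℤ) < ((4*(b+c)*p+2*p+1 : ℕ) : ℤ) by exact_mod_cast hlt)]
    rw [abs_of_nonneg (Int.natCast_nonneg _)]
    have hfin : ((4*p*c+2*a+1 : ℕ) : ℤ) + 1 = 2 * ((2*p*c+a+1 : ℕ) : ℤ) := by
      exact_mod_cast (show ((4*p*c+2*a+1+1 : ℕ) : ℤ) = ((2*(2*p*c+a+1) : ℕ) : ℤ) from by
        congr 1
        have h0 : 4*p*c = 2*(2*p*c) := by ring
        omega)
    rw [hfin, Int.mul_ediv_cancel_left _ (by norm_num)]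
  · rw [if_neg hbm]
    push_neg at hbm
    obtain ⟨c, rfl⟩ : ∃ c, b = m + 1 + c := ⟨b - m - 1, by omega⟩
    obtain ⟨d, rfl⟩ : ∃ d, m = c + d + 1 := ⟨m - c - 1, by omega⟩
    have key := key2 (c+d+1) p a ((c+d+1)+1+c) ha (by omega) (by omega)
    have e1 : 4*a*(c+d+1)+2*((c+d+1)+1+c)-1 = 2*(2*a*(c+d+1)+2*c+d+1)+1 := by
      have h0 : 4*a*(c+d+1) = 2*(2*a*(c+d+1)) := by ring
      omega
    have e2 : 4*(c+d+1)+1-2*((c+d+1)+1+c) = 2*d+1 := by omega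
    rw [e1, e2] at key
    set L : ℕ := 4*(c+d+1)*p+2*p+1 with hL
    set R : ℕ := 2*p*(2*d+1)+2*a+2 with hR
    set N : ℕ := (2 * ((2*(c+d+1)+1)*a+((c+d+1)+1+c)+1) - 1) * (4*(c+d+1)*p+1) with hN
    have hRL : R + 2*a + 2 ≤ L := by
      have h1 : 2*p*(2*d+1)+2*p = 2*p*(2*d+2) := by ring
      have h2 : 2*p*(2*d+2) ≤ 4*(c+d+1)*p := by nlinarith
      omega
    have key' : N = (L + R) + 2*L*(2*a*(c+d+1)+2*c+d+1) := by rw [key]; ring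
    have hfin : L - R + 1 = 2*(2*p*(c+1)-a) := by
      have h0 : 4*(c+d+1)*p = 4*(c*p)+4*(d*p)+4*p := by ring
      have h1 : 2*p*(2*d+1) = 4*(d*p)+2*p := by ring
      have h2 : 2*p*(c+1) = 2*(c*p)+2*p := by ring
      omega
    clear_value L R N
    have hmod : ((N : ℕ) : ℤ) % (2 * ((L : ℕ) : ℤ)) = ((L + R : ℕ) : ℤ) := by
      have hc2 : ((N : ℕ) : ℤ) = ((L + R : ℕ) : ℤ) + (2 * ((L : ℕ) : ℤ)) * ((2*a*(c+d+1)+2*c+d+1 : ℕ) : ℤ) := by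
        exact_mod_cast congrArg (Nat.cast : ℕ → ℤ) key'
      rw [hc2, Int.add_mul_emod_self_left,
        Int.emod_eq_of_lt (by positivity) (by exact_mod_cast (by omega : (L + R : ℕ) < 2*L))]
    rw [hmod, if_neg (by rw [Nat.cast_lt]; omega)]
    rw [show c+d+1+1+c - (c+d+1) = c+1 from by omega]
    have habs : |((L + R : ℕ) : ℤ) - 2 * ((L:ℕ) : ℤ)| = ((L - R : ℕ) : ℤ) := by
      rw [abs_of_nonpos (by push_cast; omega)]
      push_cast [Nat.cast_sub (by omega : R ≤ L)]
      ring
    rw [habs]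
    have hfin2 : ((L - R : ℕ) : ℤ) + 1 = 2 * ((2*p*(c+1)-a : ℕ) : ℤ) := by
      have := congrArg (Nat.cast : ℕ → ℤ) hfin
      push_cast at this ⊢
      omega
    rw [hfin2, Int.mul_ediv_cancel_left _ (by norm_num)]

lemma negonepow (d : ℕ) : ((-1:ℚ))^d = if d % 2 = 0 then 1 else -1 := by
  rcases Nat.even_or_odd d with h | h
  · rw [Even.neg_one_pow h, if_pos (Nat.even_iff.mp h)]
  · rw [Odd.neg_one_pow h, if_neg (by simpa [Nat.odd_iff] using h)]

lemma dm_div (q x y : ℕ) (hq : 0 < q) (hy : y < q) : (q*x+y) / q = x := by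
  rw [Nat.mul_add_div hq, Nat.div_eq_of_lt hy, Nat.add_zero]

lemma dm_mod (q x y : ℕ) (hy : y < q) : (q*x+y) % q = y := by
  rw [Nat.mul_add_mod, Nat.mod_eq_of_lt hy]

lemma pref_eq (p : ℕ) (hp : 1 ≤ p) (x : ℕ) :
    ∑ k ∈ Finset.range x, ((-1:ℚ))^(k/p)
      = if (x/p) % 2 = 0 then ((x%p : ℕ) : ℚ) else (p:ℚ) - ((x%p : ℕ) : ℚ) := by
  induction x with
  | zero => simp
  | succ x ih =>
    rw [Finset.sum_range_succ, ih, negonepow]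
    have hdm := (Nat.div_add_mod x p).symm
    have hr : x % p < p := Nat.mod_lt _ (by omega)
    rcases Nat.lt_or_ge (x % p + 1) p with h | h
    · have hd : (x+1)/p = x/p := by
        refine Nat.div_eq_of_lt_le ?_ ?_
        · calc x/p * p ≤ x := Nat.div_mul_le_self x p
          _ ≤ x+1 := by omega
        · have h6 : x + 1 < p*(x/p) + p := by omega
          calc x + 1 < p*(x/p) + p := h6
          _ = (x/p+1)*p := by ring
      have hm : (x+1)%p = x%p + 1 := by
        have h2 := (Nat.div_add_mod (x+1) p).symm
        rw [hd] at h2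
        generalize p * (x/p) = A at h2 hdm
        omega
      rw [hd, hm]
      rcases Nat.even_or_odd (x/p) with he | he
      · have h2 : x/p % 2 = 0 := Nat.even_iff.mp he
        simp only [h2, if_true, reduceIte]
        push_cast; ring
      · have h2 : x/p % 2 = 1 := Nat.odd_iff.mp he
        simp only [h2, reduceIte, one_ne_zero]
        push_cast; ring
    · have h5 : p*(x/p+1) = p*(x/p) + p := by ring
      have hxp : x + 1 = p * (x/p + 1) := by omega
      have hd : (x+1)/p = x/p + 1 := by rw [hxp, Nat.mul_div_cancel_left _ (by omega)]
      have hm : (x+1)%p = 0 := by rw [hxp, Nat.mul_mod_right]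
      have hxx : x % p = p - 1 := by omega
      rw [hd, hm, hxx]
      have hcast : ((p - 1 : ℕ) : ℚ) = (p:ℚ) - 1 := by
        push_cast [Nat.cast_sub hp]; ring
      rcases Nat.even_or_odd (x/p) with he | he
      · have h2 : x/p % 2 = 0 := Nat.even_iff.mp he
        have h3 : (x/p + 1) % 2 = 1 := by omega
        simp only [h2, h3, reduceIte, one_ne_zero, if_true]
        rw [hcast]; push_cast; ring
      · have h2 : x/p % 2 = 1 := Nat.odd_iff.mp he
        have h3 : (x/p + 1) % 2 = 0 := by omega
        simp only [h2, h3, reduceIte, one_ne_zero]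
        rw [hcast]; push_cast; ring

lemma ioc_sum (f : ℕ → ℚ) (x : ℕ) :
    ∑ k ∈ Finset.Ioc 0 x, f k = ∑ k ∈ Finset.range x, f (k+1) := by
  rw [show Finset.Ioc 0 x = Finset.Ico 1 (x+1) from by ext k; simp; omega,
    Finset.sum_Ico_eq_sum_range]
  simp [Nat.add_comm]

lemma tail_eq (p : ℕ) (r M : ℕ) (hr : 1 ≤ r) (hrM : r ≤ M + 1) :
    ∑ k ∈ Finset.Icc r M, ((-1:ℚ))^((k-1)/p)
      = (∑ k ∈ Finset.range M, ((-1:ℚ))^(k/p))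
        - ∑ k ∈ Finset.range (r-1), ((-1:ℚ))^(k/p) := by
  have h1 : Finset.Icc r M = Finset.Ioc (r-1) M := by ext k; simp; omega
  have h2 := Finset.sum_Ioc_consecutive (fun k => ((-1:ℚ))^((k-1)/p))
    (by omega : 0 ≤ r - 1) (by omega : r - 1 ≤ M)
  have h3 : ∀ y : ℕ, ∑ k ∈ Finset.Ioc 0 y, ((-1:ℚ))^((k-1)/p)
      = ∑ k ∈ Finset.range y, ((-1:ℚ))^(k/p) := by
    intro y
    rw [ioc_sum (fun k => ((-1:ℚ))^((k-1)/p)) y]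
    simp
  rw [h1]
  rw [h3] at h2
  rw [show (∑ k ∈ Finset.Ioc 0 M, ((-1:ℚ))^((k-1)/p)) = ∑ k ∈ Finset.range M, ((-1:ℚ))^(k/p)
    from h3 M] at h2
  linarith

lemma sum_mod_period (q : ℕ) (g : ℕ → ℚ) (P : ℕ) :
    ∑ i ∈ Finset.range (P*q), g (i % q) = P * ∑ i ∈ Finset.range q, g (i % q) := by
  induction P with
  | zero => simp
  | succ P ih =>
    rw [show (P+1)*q = P*q + q from by ring, Finset.sum_range_add, ih]
    have : ∀ i ∈ Finset.range q, g ((P*q + i) % q) = g (i % q) := by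
      intro i _
      congr 1
      rw [show P*q + i = q*P + i from by ring, Nat.mul_add_mod]
    rw [Finset.sum_congr rfl this]
    push_cast; ring

/-- tail-sum value function -/
def SSf (m p q j : ℕ) : ℚ :=
  (p:ℚ) - (((j-1)/q : ℕ) : ℚ) - (if (j-1)%q ≤ m then 0 else 1)

lemma decomp_j (q j : ℕ) (hq : 0 < q) (hj : 1 ≤ j) :
    ∃ a b, b < q ∧ j = q*a + b + 1 ∧ (j-1)/q = a ∧ (j-1)%q = b := by
  refine ⟨(j-1)/q, (j-1)%q, Nat.mod_lt _ hq, ?_, rfl, rfl⟩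
  have := (Nat.div_add_mod (j-1) q).symm
  omega

lemma SS_diff (m p j : ℕ) (hm : 1 ≤ m) (hj : 1 ≤ j) :
    SSf m p (2*m+1) j - SSf m p (2*m+1) (j+1)
      = if (j-1) % (2*m+1) = m then 1 else 0 := by
  obtain ⟨a, b, hb, hjeq, hdiv, hmod⟩ := decomp_j (2*m+1) j (by omega) hj
  unfold SSf
  rw [hdiv, hmod]
  have hj1 : j + 1 - 1 = j := by omega
  rcases Nat.lt_or_ge b (2*m) with hb2 | hb2
  · have hj2 : j = (2*m+1)*a + (b+1) := by omega
    have hd2 : (j+1-1)/(2*m+1) = a := by rw [hj1, hj2, dm_div _ _ _ (by omega) (by omega)]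
    have hm2 : (j+1-1)%(2*m+1) = b+1 := by rw [hj1, hj2, dm_mod _ _ _ (by omega)]
    rw [hd2, hm2]
    rcases Nat.lt_or_ge b m with h | h
    · rw [if_pos (by omega), if_pos (by omega), if_neg (by omega)]; ring
    · rcases Nat.eq_or_lt_of_le h with h' | h'
      · rw [if_pos (by omega), if_neg (by omega), if_pos (by omega)]; ring
      · rw [if_neg (by omega), if_neg (by omega), if_neg (by omega)]; ring
  · have hbe : b = 2*m := by omega
    have hj2 : j = (2*m+1)*(a+1) := by
      have h5 : (2*m+1)*(a+1) = (2*m+1)*a + (2*m+1) := by ring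
      omega
    have hd2 : (j+1-1)/(2*m+1) = a+1 := by
      rw [hj1, hj2, Nat.mul_div_cancel_left (a+1) (show 0 < 2*m+1 by omega)]
    have hm2 : (j+1-1)%(2*m+1) = 0 := by rw [hj1, hj2, Nat.mul_mod_right]
    rw [hd2, hm2, hbe]
    rw [if_neg (by omega), if_pos (by omega), if_neg (by omega)]
    push_cast; ring

lemma SS_top (m p : ℕ) : SSf m p (2*m+1) ((2*m+1)*p+1) = 0 := by
  unfold SSf
  have h1 : (2*m+1)*p+1-1 = (2*m+1)*p + 0 := by omega
  rw [h1, dm_div _ _ _ (by omega) (by omega), dm_mod _ _ _ (by omega)]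
  rw [if_pos (by omega)]
  ring

lemma abel_sum (A V : ℕ → ℚ) (N : ℕ) :
    ∑ i ∈ Finset.range N, A i * (V (i+1) - V i)
      = (∑ i ∈ Finset.range N, (A i - A (i+1)) * V (i+1)) + A N * V N - A 0 * V 0 := by
  induction N with
  | zero => simp
  | succ N ih => rw [Finset.sum_range_succ, ih, Finset.sum_range_succ]; ring

lemma icc_sum (f : ℕ → ℚ) (N : ℕ) :
    ∑ j ∈ Finset.Icc 1 N, f j = ∑ i ∈ Finset.range N, f (i+1) := by
  rw [show Finset.Icc 1 N = Finset.Ico 1 (N+1) from by ext k; simp,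
    Finset.sum_Ico_eq_sum_range]
  simp [Nat.add_comm]
theorem stmt11 (m p l t p' : ℕ) (hm : 1 ≤ m) (hp : 1 ≤ p)
    (hl : l = 4*m*p + 2*p + 1) (ht : t = 4*m*p + 1) (hp' : p' = (2*m+1)*p)
    (I : ℕ → ℕ)
    (hI : ∀ k : ℕ, 1 ≤ k → k ≤ p' → 1 ≤ I k ∧ I k ≤ p' ∧ rpF l t (I k) = (k : ℤ))
    (n : ℕ → ℤ) (h0 : n 0 = 0) :
    (-(1:ℚ)/2) * ∑ j ∈ Finset.Icc 1 p',
        (∑ k ∈ Finset.Icc (rpF l t j).toNat p',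
            ((sigmaF l t (I k) : ℚ) + (sigmaF l t (I (p' + 1 - k)) : ℚ))) *
          ((n j : ℚ) - (n (j-1) : ℚ))
      - (1/2 : ℚ) * ∑ j ∈ Finset.Icc 1 (p'-1),
          ((sigmaF l t (j+1) : ℚ) + (sigmaF l t (p' + 1 - j) : ℚ)) * (n j : ℚ)
      - (1/2 : ℚ) * ((sigmaF l t p' : ℚ) + 1) * (n p' : ℚ)
      - ∑ j ∈ Finset.Icc 1 p', (sigmaF l t j : ℚ)
    = - ∑ j ∈ Finset.Icc 1 (p-1), (n ((2*m+1)*j) : ℚ)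
      - ∑ j ∈ Finset.Icc 1 p, (n ((2*m+1)*j - m) : ℚ)
      - (p : ℚ) := by
  subst hl ht hp'
  have hq0 : 0 < 2*m+1 := by omega
  have hP1 : 1 ≤ (2*m+1)*p := by
    calc 1 = 1*1 := by ring
    _ ≤ (2*m+1)*p := Nat.mul_le_mul (by omega) hp
  -- closed form for sigma
  have hsig : ∀ j, 1 ≤ j → j ≤ (2*m+1)*p →
      sigmaF (4*m*p+2*p+1) (4*m*p+1) j = if (j-1)%(2*m+1) ≤ m then 1 else -1 := by
    intro j h1 h2
    obtain ⟨a, b, hb, hjeq, hdiv, hmod⟩ := decomp_j (2*m+1) j hq0 h1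
    have ha : a < p := by
      by_contra hcon
      push_neg at hcon
      have := Nat.mul_le_mul_left (2*m+1) hcon
      omega
    rw [hmod, hjeq, sig_eq m p a b hp ha (by omega)]
  -- closed form for rp
  have hrp : ∀ j, 1 ≤ j → j ≤ (2*m+1)*p → ∃ a b, a < p ∧ b ≤ 2*m ∧
      (j-1)/(2*m+1) = a ∧ (j-1)%(2*m+1) = b ∧
      rpF (4*m*p+2*p+1) (4*m*p+1) j
        = ((if b ≤ m then 2*p*(m-b)+a+1 else 2*p*(b-m)-a : ℕ) : ℤ) := by
    intro j h1 h2
    obtain ⟨a, b, hb, hjeq, hdiv, hmod⟩ := decomp_j (2*m+1) j hq0 h1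
    have ha : a < p := by
      by_contra hcon
      push_neg at hcon
      have := Nat.mul_le_mul_left (2*m+1) hcon
      omega
    exact ⟨a, b, ha, by omega, hdiv, hmod, by rw [hjeq]; exact rp_eq m p a b hp ha (by omega)⟩
  -- tau
  have htau : ∀ k, 1 ≤ k → k ≤ (2*m+1)*p →
      ((sigmaF (4*m*p+2*p+1) (4*m*p+1) (I k) : ℤ) : ℚ) = (-1:ℚ)^((k-1)/p) := by
    intro k hk1 hk2
    obtain ⟨hIk1, hIk2, hIk3⟩ := hI k hk1 hk2
    obtain ⟨a, b, ha, hb, hdiv, hmod, hr⟩ := hrp (I k) hIk1 hIk2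
    rw [hr] at hIk3
    have hk : (if b ≤ m then 2*p*(m-b)+a+1 else 2*p*(b-m)-a : ℕ) = k := by exact_mod_cast hIk3
    rw [hsig (I k) hIk1 hIk2, hmod]
    by_cases hbm : b ≤ m
    · rw [if_pos hbm] at hk ⊢
      have h6 : 2*p*(m-b) = p*(2*(m-b)) := by ring
      have h7 : k - 1 = p*(2*(m-b)) + a := by omega
      rw [h7, dm_div p _ a (by omega) ha]
      rw [Even.neg_one_pow ⟨(m-b), by ring⟩]
      norm_num
    · rw [if_neg hbm] at hk ⊢
      obtain ⟨e, he⟩ : ∃ e, b - m = e + 1 := ⟨b-m-1, by omega⟩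
      have h6 : 2*p*(b-m) = p*(2*e+1) + p := by rw [he]; ring
      have h7 : k - 1 = p*(2*e+1) + (p-1-a) := by omega
      rw [h7, dm_div p _ _ (by omega) (by omega)]
      rw [Odd.neg_one_pow ⟨e, by ring⟩]
      norm_num
  have htau2 : ∀ k, 1 ≤ k → k ≤ (2*m+1)*p →
      ((sigmaF (4*m*p+2*p+1) (4*m*p+1) (I ((2*m+1)*p + 1 - k)) : ℤ) : ℚ) = (-1:ℚ)^((k-1)/p) := by
    intro k hk1 hk2
    rw [htau ((2*m+1)*p + 1 - k) (by omega) (by omega)]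
    have hdm := Nat.div_add_mod (k-1) p
    have hβ : (k-1)%p < p := Nat.mod_lt _ (by omega)
    have hα : (k-1)/p ≤ 2*m := by
      by_contra hcon
      push_neg at hcon
      have h8 := Nat.mul_le_mul_left p (show 2*m+1 ≤ (k-1)/p by omega)
      have h9 : p*(2*m+1) = (2*m+1)*p := by ring
      omega
    have hkey : (2*m+1)*p + 1 - k - 1 = p*(2*m-(k-1)/p) + (p-1-(k-1)%p) := by
      have hx : p*((2*m-(k-1)/p) + (k-1)/p + 1) = p*(2*m-(k-1)/p)+p*((k-1)/p)+p := by ring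
      have hy : p*((2*m-(k-1)/p) + (k-1)/p + 1) = (2*m+1)*p := by
        rw [show (2*m-(k-1)/p) + (k-1)/p + 1 = 2*m+1 from by omega]; ring
      omega
    rw [hkey, dm_div p _ _ (by omega) (by omega)]
    have hpp : ((-1:ℚ))^(2*m-(k-1)/p) * ((-1:ℚ))^((k-1)/p) = 1 := by
      rw [← pow_add, show 2*m-(k-1)/p + (k-1)/p = 2*m from by omega]
      exact Even.neg_one_pow (even_two_mul m)
    have hy2 : ((-1:ℚ))^((k-1)/p) * ((-1:ℚ))^((k-1)/p) = 1 := by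
      rw [← pow_add]
      exact Even.neg_one_pow ⟨(k-1)/p, rfl⟩
    calc ((-1:ℚ))^(2*m-(k-1)/p)
        = ((-1:ℚ))^(2*m-(k-1)/p) * (((-1:ℚ))^((k-1)/p) * ((-1:ℚ))^((k-1)/p)) := by
          rw [hy2, mul_one]
      _ = (((-1:ℚ))^(2*m-(k-1)/p) * ((-1:ℚ))^((k-1)/p)) * ((-1:ℚ))^((k-1)/p) := by ring
      _ = ((-1:ℚ))^((k-1)/p) := by rw [hpp, one_mul]
  -- inner sum closed form
  have hinner : ∀ j ∈ Finset.Icc 1 ((2*m+1)*p),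
      (∑ k ∈ Finset.Icc (rpF (4*m*p+2*p+1) (4*m*p+1) j).toNat ((2*m+1)*p),
        (((sigmaF (4*m*p+2*p+1) (4*m*p+1) (I k) : ℤ) : ℚ)
          + ((sigmaF (4*m*p+2*p+1) (4*m*p+1) (I ((2*m+1)*p + 1 - k)) : ℤ) : ℚ)))
      = 2 * SSf m p (2*m+1) j := by
    intro j hj
    rw [Finset.mem_Icc] at hj
    obtain ⟨a, b, ha, hb, hdiv, hmod, hr⟩ := hrp j hj.1 hj.2
    rw [hr, Int.toNat_natCast]
    set r : ℕ := (if b ≤ m then 2*p*(m-b)+a+1 else 2*p*(b-m)-a : ℕ) with hrdef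
    have hr1 : 1 ≤ r ∧ r ≤ (2*m+1)*p := by
      rw [hrdef]
      have h9 : (2*m+1)*p = 2*p*m + p := by ring
      by_cases hbm : b ≤ m
      · rw [if_pos hbm]
        have h6 : 2*p*(m-b) ≤ 2*p*m := Nat.mul_le_mul_left _ (by omega)
        omega
      · rw [if_neg hbm]
        obtain ⟨e, he⟩ : ∃ e, b - m = e + 1 := ⟨b-m-1, by omega⟩
        have h6 : 2*p*(b-m) = 2*p*e + 2*p := by rw [he]; ring
        have h7 : 2*p*(b-m) ≤ 2*p*m := Nat.mul_le_mul_left _ (by omega)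
        omega
    have hcong : ∀ k ∈ Finset.Icc r ((2*m+1)*p),
        (((sigmaF (4*m*p+2*p+1) (4*m*p+1) (I k) : ℤ) : ℚ)
          + ((sigmaF (4*m*p+2*p+1) (4*m*p+1) (I ((2*m+1)*p + 1 - k)) : ℤ) : ℚ))
        = 2 * ((-1:ℚ))^((k-1)/p) := by
      intro k hk
      rw [Finset.mem_Icc] at hk
      have hk1 : 1 ≤ k := by omega
      rw [htau k hk1 hk.2, htau2 k hk1 hk.2]; ring
    rw [Finset.sum_congr rfl hcong, ← Finset.mul_sum]
    rw [tail_eq p r ((2*m+1)*p) hr1.1 (by omega)]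
    rw [pref_eq p hp ((2*m+1)*p), pref_eq p hp (r-1)]
    have hA : ((2*m+1)*p)/p = 2*m+1 := by
      rw [show (2*m+1)*p = p*(2*m+1)+0 from by ring, dm_div p _ 0 (by omega) (by omega)]
    have hB : ((2*m+1)*p)%p = 0 := by
      rw [show (2*m+1)*p = p*(2*m+1)+0 from by ring, dm_mod p _ 0 (by omega)]
    rw [hA, hB]
    rw [if_neg (by omega)]
    unfold SSf
    rw [hdiv, hmod]
    by_cases hbm : b ≤ m
    · have hre : r = 2*p*(m-b)+a+1 := by rw [hrdef, if_pos hbm]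
      have h6 : 2*p*(m-b) = p*(2*(m-b)) := by ring
      have hC : (r-1)/p = 2*(m-b) := by
        rw [show r-1 = p*(2*(m-b)) + a from by omega, dm_div p _ a (by omega) ha]
      have hD : (r-1)%p = a := by
        rw [show r-1 = p*(2*(m-b)) + a from by omega, dm_mod p _ a ha]
      rw [hC, hD, if_pos (by omega), if_pos hbm]
      push_cast
      ring
    · have hre : r = 2*p*(b-m)-a := by rw [hrdef, if_neg hbm]
      obtain ⟨e, he⟩ : ∃ e, b - m = e + 1 := ⟨b-m-1, by omega⟩
      have h6 : 2*p*(b-m) = p*(2*e+1) + p := by rw [he]; ring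
      have hC : (r-1)/p = 2*e+1 := by
        rw [show r-1 = p*(2*e+1) + (p-1-a) from by omega, dm_div p _ _ (by omega) (by omega)]
      have hD : (r-1)%p = p-1-a := by
        rw [show r-1 = p*(2*e+1) + (p-1-a) from by omega, dm_mod p _ _ (by omega)]
      rw [hC, hD, if_neg (by omega), if_neg hbm]
      have hc1 : ((p-1-a : ℕ) : ℚ) = (p:ℚ) - 1 - a := by
        push_cast [Nat.cast_sub (show a ≤ p-1 by omega), Nat.cast_sub (show 1 ≤ p by omega)]
        ring
      rw [hc1]
      push_cast
      ring
  -- filter/image identifications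
  have himg1 : (Finset.Icc 1 ((2*m+1)*p-1)).filter (fun j => j % (2*m+1) = 0)
      = (Finset.Icc 1 (p-1)).image (fun j' => (2*m+1)*j') := by
    ext x
    simp only [Finset.mem_filter, Finset.mem_Icc, Finset.mem_image]
    constructor
    · rintro ⟨⟨hx1, hx2⟩, hx3⟩
      obtain ⟨c, rfl⟩ := Nat.dvd_of_mod_eq_zero hx3
      refine ⟨c, ⟨?_, ?_⟩, rfl⟩
      · by_contra hcon
        push_neg at hcon
        interval_cases c <;> omega
      · by_contra hcon
        push_neg at hcon
        have := Nat.mul_le_mul_left (2*m+1) (show p ≤ c by omega)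
        omega
    · rintro ⟨c, ⟨hc1, hc2⟩, rfl⟩
      have h1 := Nat.mul_le_mul_left (2*m+1) hc2
      have h2 : (2*m+1)*(p-1) + (2*m+1) = (2*m+1)*p := by
        rw [← Nat.mul_succ]
        congr 1
        omega
      have h3 := Nat.mul_le_mul_left (2*m+1) hc1
      refine ⟨⟨by omega, by omega⟩, Nat.mul_mod_right _ _⟩
  have himg2 : (Finset.Icc 1 ((2*m+1)*p)).filter (fun j => (j-1) % (2*m+1) = m)
      = (Finset.Icc 1 p).image (fun j' => (2*m+1)*j'-m) := by
    ext x
    simp only [Finset.mem_filter, Finset.mem_Icc, Finset.mem_image]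
    constructor
    · rintro ⟨⟨hx1, hx2⟩, hx3⟩
      have hdm := Nat.div_add_mod (x-1) (2*m+1)
      set a := (x-1)/(2*m+1) with hadef
      refine ⟨a+1, ⟨Nat.succ_le_succ (Nat.zero_le a), ?_⟩, ?_⟩
      · by_contra hcon
        push_neg at hcon
        have := Nat.mul_le_mul_left (2*m+1) (show p ≤ a by omega)
        omega
      · have h5 : (2*m+1)*(a+1) = (2*m+1)*a + (2*m+1) := by ring
        omega
    · rintro ⟨c, ⟨hc1, hc2⟩, rfl⟩
      have h1 := Nat.mul_le_mul_left (2*m+1) hc2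
      have h3 := Nat.mul_le_mul_left (2*m+1) hc1
      have h5 : (2*m+1)*c-m-1 = (2*m+1)*(c-1) + m := by
        have h6 : (2*m+1)*(c-1) + (2*m+1) = (2*m+1)*c := by
          rw [← Nat.mul_succ]; congr 1; omega
        omega
      refine ⟨⟨by omega, by omega⟩, ?_⟩
      rw [show (2*m+1)*c-m-1 = (2*m+1)*(c-1) + m from h5, dm_mod _ _ _ (by omega)]
  -- sum of sigmas
  have hsum4 : ∑ j ∈ Finset.Icc 1 ((2*m+1)*p),
      ((sigmaF (4*m*p+2*p+1) (4*m*p+1) j : ℤ) : ℚ) = (p:ℚ) := by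
    rw [icc_sum (fun j => ((sigmaF (4*m*p+2*p+1) (4*m*p+1) j : ℤ) : ℚ)) ((2*m+1)*p)]
    have hcong : ∀ i ∈ Finset.range ((2*m+1)*p),
        ((sigmaF (4*m*p+2*p+1) (4*m*p+1) (i+1) : ℤ) : ℚ)
          = (fun x => if x ≤ m then (1:ℚ) else -1) (i % (2*m+1)) := by
      intro i hi
      rw [Finset.mem_range] at hi
      rw [hsig (i+1) (by omega) (by omega)]
      simp only [Nat.add_sub_cancel]
      by_cases hc : i % (2*m+1) ≤ m
      · rw [if_pos hc]; simp [hc]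
      · rw [if_neg hc]; simp [hc]
    rw [Finset.sum_congr rfl hcong]
    rw [show (2*m+1)*p = p*(2*m+1) from by ring]
    rw [sum_mod_period (2*m+1) (fun x => if x ≤ m then (1:ℚ) else -1) p]
    have hone : ∑ i ∈ Finset.range (2*m+1),
        (fun x => if x ≤ m then (1:ℚ) else -1) (i % (2*m+1)) = 1 := by
      have hc2 : ∀ i ∈ Finset.range (2*m+1),
          (fun x => if x ≤ m then (1:ℚ) else -1) (i % (2*m+1))
            = (fun x => if x ≤ m then (1:ℚ) else -1) i := by
        intro i hi
        rw [Finset.mem_range] at hi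
        rw [Nat.mod_eq_of_lt hi]
      rw [Finset.sum_congr rfl hc2, show 2*m+1 = (m+1) + m from by omega, Finset.sum_range_add]
      have hfirst : ∀ i ∈ Finset.range (m+1), (fun x => if x ≤ m then (1:ℚ) else -1) i = 1 := by
        intro i hi; rw [Finset.mem_range] at hi
        simp only [if_pos (show i ≤ m by omega)]
      have hsecond : ∀ i ∈ Finset.range m, (fun x => if x ≤ m then (1:ℚ) else -1) (m+1+i) = -1 := by
        intro i hi
        simp only [if_neg (show ¬ m+1+i ≤ m by omega)]
      rw [Finset.sum_congr rfl hfirst, Finset.sum_congr rfl hsecond,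
        Finset.sum_const, Finset.sum_const, Finset.card_range, Finset.card_range]
      push_cast
      ring
    rw [hone, mul_one]
  -- pointwise value for second sum
  have hptB : ∀ j ∈ Finset.Icc 1 ((2*m+1)*p-1),
      (((sigmaF (4*m*p+2*p+1) (4*m*p+1) (j+1) : ℤ) : ℚ)
        + ((sigmaF (4*m*p+2*p+1) (4*m*p+1) ((2*m+1)*p + 1 - j) : ℤ) : ℚ)) * ((n j : ℤ) : ℚ)
      = (if j % (2*m+1) = 0 then (2:ℚ) else 0) * ((n j : ℤ) : ℚ) := by
    intro j hj
    rw [Finset.mem_Icc] at hj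
    obtain ⟨a, b, hb, hjeq, hdiv, hmod⟩ := decomp_j (2*m+1) j hq0 hj.1
    have ha : a < p := by
      by_contra hcon
      push_neg at hcon
      have := Nat.mul_le_mul_left (2*m+1) hcon
      omega
    have hx2 : (2*m+1)*((p-1-a)+a+1) = (2*m+1)*p := by
      rw [show (p-1-a)+a+1 = p from by omega]
    have hx3 : (2*m+1)*((p-1-a)+a+1) = (2*m+1)*(p-1-a)+(2*m+1)*a+(2*m+1) := by ring
    have hPj : (2*m+1)*p + 1 - j - 1 = (2*m+1)*(p-1-a) + (2*m-b) := by omega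
    have hmodPj : ((2*m+1)*p+1-j-1)%(2*m+1) = 2*m-b := by
      rw [hPj, dm_mod _ _ _ (by omega)]
    rw [hsig (j+1) (by omega) (by omega), hsig ((2*m+1)*p+1-j) (by omega) (by omega), hmodPj]
    have hj1 : j + 1 - 1 = j := by omega
    rcases Nat.lt_or_ge b (2*m) with hb2 | hb2
    · have hmodj : (j+1-1)%(2*m+1) = b+1 := by
        rw [hj1, show j = (2*m+1)*a + (b+1) from by omega, dm_mod _ _ _ (by omega)]
      have hmodj' : j % (2*m+1) = b+1 := by rw [← hj1, hmodj]
      rw [hmodj, hmodj']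
      rcases Nat.lt_or_ge b m with h | h
      · rw [if_pos (by omega), if_neg (by omega), if_neg (by omega)]
        push_cast; ring
      · rcases Nat.eq_or_lt_of_le h with h' | h'
        · rw [if_neg (by omega), if_pos (by omega), if_neg (by omega)]
          push_cast; ring
        · rw [if_neg (by omega), if_pos (by omega), if_neg (by omega)]
          push_cast; ring
    · have hbe : b = 2*m := by omega
      have hjq : j = (2*m+1)*(a+1) := by
        have h5 : (2*m+1)*(a+1) = (2*m+1)*a + (2*m+1) := by ring
        omega
      have hmodj : (j+1-1)%(2*m+1) = 0 := by rw [hj1, hjq, Nat.mul_mod_right]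
      have hmodj' : j % (2*m+1) = 0 := by rw [← hj1, hmodj]
      rw [hmodj, hmodj']
      rw [if_pos (by omega), if_pos (by omega), if_pos rfl]
      push_cast [hbe]
      ring
  -- second sum value
  have haveB : ∑ j ∈ Finset.Icc 1 ((2*m+1)*p-1),
      (((sigmaF (4*m*p+2*p+1) (4*m*p+1) (j+1) : ℤ) : ℚ)
        + ((sigmaF (4*m*p+2*p+1) (4*m*p+1) ((2*m+1)*p + 1 - j) : ℤ) : ℚ)) * ((n j : ℤ) : ℚ)
      = 2 * ∑ j' ∈ Finset.Icc 1 (p-1), ((n ((2*m+1)*j') : ℤ) : ℚ) := by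
    rw [Finset.sum_congr rfl hptB]
    simp only [ite_mul, zero_mul]
    rw [← Finset.sum_filter, himg1,
      Finset.sum_image (fun x _ y _ h => Nat.eq_of_mul_eq_mul_left hq0 h), Finset.mul_sum]
  -- first sum value
  have hA1 : ∀ j ∈ Finset.Icc 1 ((2*m+1)*p),
      (∑ k ∈ Finset.Icc (rpF (4*m*p+2*p+1) (4*m*p+1) j).toNat ((2*m+1)*p),
        (((sigmaF (4*m*p+2*p+1) (4*m*p+1) (I k) : ℤ) : ℚ)
          + ((sigmaF (4*m*p+2*p+1) (4*m*p+1) (I ((2*m+1)*p + 1 - k)) : ℤ) : ℚ)))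
        * (((n j : ℤ) : ℚ) - ((n (j-1) : ℤ) : ℚ))
      = 2 * (SSf m p (2*m+1) j * (((n j : ℤ) : ℚ) - ((n (j-1) : ℤ) : ℚ))) := by
    intro j hj
    rw [hinner j hj]
    ring
  have hinj2 : ∀ x ∈ Finset.Icc 1 p, ∀ y ∈ Finset.Icc 1 p,
      (2*m+1)*x-m = (2*m+1)*y-m → x = y := by
    intro x hx y hy h
    rw [Finset.mem_Icc] at hx hy
    have h1 := Nat.mul_le_mul_left (2*m+1) hx.1
    have h2 := Nat.mul_le_mul_left (2*m+1) hy.1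
    have h3 : (2*m+1)*x = (2*m+1)*y := by omega
    exact Nat.eq_of_mul_eq_mul_left hq0 h3
  have haveA : ∑ j ∈ Finset.Icc 1 ((2*m+1)*p),
      (∑ k ∈ Finset.Icc (rpF (4*m*p+2*p+1) (4*m*p+1) j).toNat ((2*m+1)*p),
        (((sigmaF (4*m*p+2*p+1) (4*m*p+1) (I k) : ℤ) : ℚ)
          + ((sigmaF (4*m*p+2*p+1) (4*m*p+1) (I ((2*m+1)*p + 1 - k)) : ℤ) : ℚ)))
        * (((n j : ℤ) : ℚ) - ((n (j-1) : ℤ) : ℚ))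
      = 2 * ∑ j' ∈ Finset.Icc 1 p, ((n ((2*m+1)*j'-m) : ℤ) : ℚ) := by
    rw [Finset.sum_congr rfl hA1, ← Finset.mul_sum]
    congr 1
    rw [icc_sum (fun j => SSf m p (2*m+1) j * (((n j : ℤ) : ℚ) - ((n (j-1) : ℤ) : ℚ)))
      ((2*m+1)*p)]
    simp only [Nat.add_sub_cancel]
    rw [abel_sum (fun i => SSf m p (2*m+1) (i+1)) (fun i => ((n i : ℤ) : ℚ)) ((2*m+1)*p)]
    rw [SS_top m p, h0]
    simp only [Int.cast_zero, mul_zero, zero_mul, add_zero, sub_zero]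
    have hd : ∀ i ∈ Finset.range ((2*m+1)*p),
        (SSf m p (2*m+1) (i+1) - SSf m p (2*m+1) (i+1+1)) * ((n (i+1) : ℤ) : ℚ)
        = (if i % (2*m+1) = m then (1:ℚ) else 0) * ((n (i+1) : ℤ) : ℚ) := by
      intro i _
      rw [SS_diff m p (i+1) hm (by omega)]
      simp only [Nat.add_sub_cancel]
    rw [Finset.sum_congr rfl hd]
    have hback : ∑ j ∈ Finset.Icc 1 ((2*m+1)*p),
        (if (j-1) % (2*m+1) = m then (1:ℚ) else 0) * ((n j : ℤ) : ℚ)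
        = ∑ i ∈ Finset.range ((2*m+1)*p), (if i % (2*m+1) = m then (1:ℚ) else 0) * ((n (i+1) : ℤ) : ℚ) := by
      rw [icc_sum (fun j => (if (j-1)%(2*m+1) = m then (1:ℚ) else 0) * ((n j : ℤ) : ℚ)) ((2*m+1)*p)]
      simp only [Nat.add_sub_cancel]
    rw [← hback]
    simp only [ite_mul, one_mul, zero_mul]
    rw [← Finset.sum_filter, himg2, Finset.sum_image hinj2]
  -- sigma at p'
  have hsigP : sigmaF (4*m*p+2*p+1) (4*m*p+1) ((2*m+1)*p) = -1 := by
    rw [hsig ((2*m+1)*p) hP1 le_rfl]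
    have h5 : (2*m+1)*p - 1 = (2*m+1)*(p-1) + 2*m := by
      have h6 : (2*m+1)*(p-1) + (2*m+1) = (2*m+1)*p := by
        rw [← Nat.mul_succ]; congr 1; omega
      omega
    rw [if_neg (by rw [h5, dm_mod _ _ _ (by omega)]; omega)]
  rw [haveA, haveB, hsum4, hsigP]
  push_cast
  ring
end

section
/- Let q be a complex number that is not a root of unity. For every integer p ≥ 1, the pair (α_n^{(p)}, β_n^{(p)}) defined by α_n^{(p)} = (−1)^n q^{n(n−1)/2 + p(n²+n)} (1 − q^{2n+1})/(1 − q) and β_n^{(p)} = (1/(q;q)_n) · Σ_{n = n_p ≥ n_{p−1} ≥ ⋯ ≥ n_1 ≥ 0} ∏_{j=1}^{p−1} q^{n_j² + n_j} [n_{j+1} choose n_j]_q forms a Bailey pair relative to q; that is, for every n ≥ 0, (1/(q;q)_n) · Σ_{n = n_p ≥ n_{p−1} ≥ ⋯ ≥ n_1 ≥ 0} ∏_{j=1}^{p−1} q^{n_j² + n_j} [n_{j+1} choose n_j]_q = Σ_{k=0}^{n} ( (−1)^k q^{k(k−1)/2 + p(k²+k)} (1 − q^{2k+1})/(1 − q)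 ) / ( (q;q)_{n−k} · (q²;q)_{n+k} ). -/
/-- The q-Pochhammer symbol `(a;q)_n = ∏_{k=0}^{n-1} (1 - a q^k)`. -/
def qPoch (a q : ℂ) (n : ℕ) : ℂ := ∏ k ∈ Finset.range n, (1 - a * q ^ k)

/-- The Gaussian binomial coefficient `[a choose b]_q = (q;q)_a / ((q;q)_{a-b} (q;q)_b)`. -/
noncomputable def qbinR (q : ℂ) (a b : ℕ) : ℂ := qPoch q q a / (qPoch q q (a - b) * qPoch q q b)

namespace St15

variable {q : ℂ}

lemma qPoch_zero (a q : ℂ) : qPoch a q 0 = 1 := by simp [qPoch]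

lemma qPoch_succ (a q : ℂ) (n : ℕ) : qPoch a q (n+1) = qPoch a q n * (1 - a * q ^ n) := by
  simp [qPoch, Finset.prod_range_succ]

lemma qPoch_add (a q : ℂ) (m n : ℕ) :
    qPoch a q (m + n) = qPoch a q m * qPoch (a * q ^ m) q n := by
  rw [qPoch, qPoch, qPoch, Finset.prod_range_add]
  congr 1
  refine Finset.prod_congr rfl fun k _ => ?_
  rw [pow_add]; ring

lemma pow_ne (hq : ∀ k : ℕ, 1 ≤ k → q ^ k ≠ 1) {s : ℕ} (hs : 1 ≤ s) (n : ℕ) :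
    qPoch (q ^ s) q n ≠ 0 := by
  rw [qPoch]
  refine Finset.prod_ne_zero_iff.2 fun k _ => ?_
  rw [← pow_add]
  intro h
  exact hq (s + k) (by omega) ((sub_eq_zero.mp h).symm)

lemma P_ne (hq : ∀ k : ℕ, 1 ≤ k → q ^ k ≠ 1) (n : ℕ) : qPoch q q n ≠ 0 := by
  have := pow_ne hq (s := 1) le_rfl n
  simpa using this

lemma Q_ne (hq : ∀ k : ℕ, 1 ≤ k → q ^ k ≠ 1) (n : ℕ) : qPoch (q^2) q n ≠ 0 :=
  pow_ne hq (by norm_num) n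

lemma PQ (q : ℂ) (n : ℕ) : qPoch q q (n+1) = (1 - q) * qPoch (q^2) q n := by
  have h := qPoch_add q q 1 n
  rw [add_comm 1 n] at h
  rw [h, show q * q ^ 1 = q^2 by ring]
  congr 1
  simp [qPoch]

lemma one_sub_q_ne (hq : ∀ k : ℕ, 1 ≤ k → q ^ k ≠ 1) : (1 - q) ≠ 0 := by
  have := hq 1 le_rfl
  rw [pow_one] at this
  intro h
  exact this ((sub_eq_zero.mp h).symm)

lemma qbinR_zero (hq : ∀ k : ℕ, 1 ≤ k → q ^ k ≠ 1) (m : ℕ) : qbinR q m 0 = 1 := by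
  rw [qbinR]
  simp [qPoch_zero]
  exact P_ne hq m

lemma qbinR_self (hq : ∀ k : ℕ, 1 ≤ k → q ^ k ≠ 1) (m : ℕ) : qbinR q m m = 1 := by
  rw [qbinR]
  simp [qPoch_zero]
  exact P_ne hq m

-- Pascal 1: B(m+1,j) = B(m,j) + q^(m+1-j) B(m,j-1) for 1 ≤ j ≤ m
lemma pascal1 (hq : ∀ k : ℕ, 1 ≤ k → q ^ k ≠ 1) {m j : ℕ} (h1 : 1 ≤ j) (h2 : j ≤ m) :
    qbinR q (m+1) j = qbinR q m j + q ^ (m+1-j) * qbinR q m (j-1) := by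
  obtain ⟨a, rfl⟩ : ∃ a, j = a + 1 := ⟨j - 1, by omega⟩
  obtain ⟨d, rfl⟩ : ∃ d, m = a + d + 1 := ⟨m - (a+1), by omega⟩
  have e1 : a + d + 1 + 1 - (a + 1) = d + 1 := by omega
  have e2 : a + d + 1 - (a + 1) = d := by omega
  have e3 : a + d + 1 - (a + 1 - 1) = d + 1 := by omega
  have e4 : a + 1 - 1 = a := by omega
  rw [qbinR, qbinR, qbinR, e1, e2, e3, e4]
  rw [qPoch_succ q q (a+d+1), qPoch_succ q q (a+d), qPoch_succ q q a]
  have hP1 := P_ne hq (a+d+1)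
  have hP2 := P_ne hq (d+1)
  have hP3 := P_ne hq a
  have hP4 := P_ne hq d
  have hq1 : (1 : ℂ) - q * q ^ (a + d) ≠ 0 := by
    intro h; exact hq (a+d+1) (by omega) (by rw [pow_succ']; exact (sub_eq_zero.mp h).symm)
  have hq2 : (1 : ℂ) - q * q ^ a ≠ 0 := by
    intro h; exact hq (a+1) (by omega) (by rw [pow_succ']; exact (sub_eq_zero.mp h).symm)
  rw [qPoch_succ q q d] at hP2 ⊢
  have hq3 : (1 : ℂ) - q * q ^ d ≠ 0 := fun h => hP2 (by rw [h, mul_zero])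
  field_simp
  ring_nf

-- Pascal 2: B(m+1,j) = q^j B(m,j) + B(m,j-1) for 1 ≤ j ≤ m
lemma pascal2 (hq : ∀ k : ℕ, 1 ≤ k → q ^ k ≠ 1) {m j : ℕ} (h1 : 1 ≤ j) (h2 : j ≤ m) :
    qbinR q (m+1) j = q ^ j * qbinR q m j + qbinR q m (j-1) := by
  obtain ⟨a, rfl⟩ : ∃ a, j = a + 1 := ⟨j - 1, by omega⟩
  obtain ⟨d, rfl⟩ : ∃ d, m = a + d + 1 := ⟨m - (a+1), by omega⟩
  have e1 : a + d + 1 + 1 - (a + 1) = d + 1 := by omega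
  have e2 : a + d + 1 - (a + 1) = d := by omega
  have e3 : a + d + 1 - (a + 1 - 1) = d + 1 := by omega
  have e4 : a + 1 - 1 = a := by omega
  rw [qbinR, qbinR, qbinR, e1, e2, e3, e4]
  rw [qPoch_succ q q (a+d+1), qPoch_succ q q (a+d), qPoch_succ q q a]
  have hP1 := P_ne hq (a+d+1)
  have hP2 := P_ne hq (d+1)
  have hP3 := P_ne hq a
  have hq1 : (1 : ℂ) - q * q ^ (a + d) ≠ 0 := by
    intro h; exact hq (a+d+1) (by omega) (by rw [pow_succ']; exact (sub_eq_zero.mp h).symm)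
  have hq2 : (1 : ℂ) - q * q ^ a ≠ 0 := by
    intro h; exact hq (a+1) (by omega) (by rw [pow_succ']; exact (sub_eq_zero.mp h).symm)
  rw [qPoch_succ q q d] at hP2 ⊢
  have hq3 : (1 : ℂ) - q * q ^ d ≠ 0 := fun h => hP2 (by rw [h, mul_zero])
  have hP4 := P_ne hq d
  field_simp
  ring_nf

/-- `t i s = (i-s)(i-s-1)/2` as an integer-valued nonneg exponent. -/
def t (i s : ℕ) : ℕ := (i - s).choose 2 + (s - i + 1).choose 2

lemma choose2_succ (d : ℕ) : (d+1).choose 2 = d.choose 2 + d := by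
  rw [Nat.choose_succ_succ]
  simp [Nat.choose_one_right]
  ring

lemma tlem1 {s : ℕ} (hs : 1 ≤ s) (i : ℕ) : t i s + i = t i (s-1) + s := by
  rcases le_or_gt s i with h | h
  · have c1 : (i - (s-1)).choose 2 = (i - s).choose 2 + (i - s) := by
      rw [show i - (s-1) = (i - s) + 1 by omega, choose2_succ]
    have c2 : (s - i + 1).choose 2 = 0 := by rw [show s - i + 1 = 1 by omega]; rfl
    have c3 : (s - 1 - i + 1).choose 2 = 0 := by rw [show s - 1 - i + 1 = 1 by omega]; rfl
    simp only [t]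
    omega
  · have c1 : (i - s).choose 2 = 0 := by rw [show i - s = 0 by omega]; rfl
    have c2 : (i - (s-1)).choose 2 = 0 := by rw [show i - (s-1) = 0 by omega]; rfl
    have c3 : (s - i + 1).choose 2 = (s - 1 - i + 1).choose 2 + (s - 1 - i + 1) := by
      rw [show s - i + 1 = (s - 1 - i + 1) + 1 by omega, choose2_succ]
    simp only [t]
    omega

lemma tlem2 {s : ℕ} (hs : 1 ≤ s) (i : ℕ) : t (i+1) s = t i (s-1) := by
  have e1 : i + 1 - s = i - (s-1) := by omega
  have e2 : s - (i+1) + 1 = s - 1 - i + 1 := by omega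
  rw [t, t, e1, e2]

lemma t_zero (i : ℕ) : t i 0 = i.choose 2 := by
  rw [t]
  simp

noncomputable def V (q : ℂ) (m s : ℕ) : ℂ :=
  ∑ i ∈ Finset.range (m+1), (-1)^i * q ^ (t i s) * qbinR q m i

lemma Vrec_core (hq : ∀ k : ℕ, 1 ≤ k → q ^ k ≠ 1) (m : ℕ) (e : ℕ → ℕ) :
    ∑ i ∈ Finset.range (m+2), (-1)^i * q ^ (e i) * qbinR q (m+1) i
      = (∑ i ∈ Finset.range (m+1), (-1)^i * q ^ (e i + i) * qbinR q m i)
        - ∑ i ∈ Finset.range (m+1), (-1)^i * q ^ (e (i+1)) * qbinR q m i := by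
  have key : ∀ i ∈ Finset.range (m+2),
      (-1 : ℂ)^i * q ^ (e i) * qbinR q (m+1) i
        = (if i ≤ m then (-1:ℂ)^i * q ^ (e i + i) * qbinR q m i else 0)
          + (if i = 0 then 0 else (-1:ℂ)^i * q ^ (e i) * qbinR q m (i-1)) := by
    intro i hi
    rw [Finset.mem_range] at hi
    rcases Nat.eq_zero_or_pos i with rfl | hpos
    · simp [qbinR_zero hq]
    rcases Nat.lt_or_ge i (m+1) with hlt | hge
    · have hle : i ≤ m := by omega
      rw [if_pos hle, if_neg (by omega)]
      rw [pascal2 hq hpos hle, pow_add]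
      ring
    · have : i = m + 1 := by omega
      subst this
      rw [if_neg (by omega), if_neg (by omega)]
      have e4 : m + 1 - 1 = m := by omega
      rw [e4, qbinR_self hq, qbinR_self hq]
      ring
  rw [Finset.sum_congr rfl key, Finset.sum_add_distrib]
  have h1 : ∑ i ∈ Finset.range (m + 2), (if i ≤ m then (-1:ℂ)^i * q ^ (e i + i) * qbinR q m i else 0)
      = ∑ i ∈ Finset.range (m+1), (-1:ℂ)^i * q ^ (e i + i) * qbinR q m i := by
    rw [Finset.sum_range_succ, if_neg (by omega), add_zero]
    refine Finset.sum_congr rfl fun i hi => ?_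
    rw [Finset.mem_range] at hi
    rw [if_pos (by omega)]
  have h2 : ∑ i ∈ Finset.range (m + 2), (if i = 0 then (0:ℂ) else (-1:ℂ)^i * q ^ (e i) * qbinR q m (i-1))
      = -∑ i ∈ Finset.range (m+1), (-1:ℂ)^i * q ^ (e (i+1)) * qbinR q m i := by
    rw [Finset.sum_range_succ', if_pos rfl, add_zero, ← Finset.sum_neg_distrib]
    refine Finset.sum_congr rfl fun i hi => ?_
    rw [if_neg (by omega)]
    have e5 : i + 1 - 1 = i := rfl
    rw [e5, pow_succ]
    ring
  rw [h1, h2]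
  ring

lemma Wzero (hq : ∀ k : ℕ, 1 ≤ k → q ^ k ≠ 1) {m : ℕ} (hm : 1 ≤ m) : V q m 0 = 0 := by
  obtain ⟨m', rfl⟩ : ∃ m', m = m' + 1 := ⟨m - 1, by omega⟩
  rw [V]
  simp only [t_zero]
  rw [show m' + 1 + 1 = m' + 2 by omega]
  rw [Vrec_core hq m' (fun i => i.choose 2)]
  rw [sub_eq_zero]
  refine Finset.sum_congr rfl fun i _ => ?_
  rw [choose2_succ]

lemma Vrec (hq : ∀ k : ℕ, 1 ≤ k → q ^ k ≠ 1) {m s : ℕ} (hs : 1 ≤ s) (hm : 1 ≤ m) :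
    V q m s = (q ^ s - 1) * V q (m-1) (s-1) := by
  obtain ⟨m', rfl⟩ : ∃ m', m = m' + 1 := ⟨m - 1, by omega⟩
  rw [V, show m' + 1 + 1 = m' + 2 by omega, Vrec_core hq m' (fun i => t i s)]
  have h1 : ∀ i ∈ Finset.range (m'+1), (-1:ℂ)^i * q ^ (t i s + i) * qbinR q m' i
      = q ^ s * ((-1)^i * q ^ (t i (s-1)) * qbinR q m' i) := by
    intro i _
    rw [tlem1 hs i, pow_add]
    ring
  have h2 : ∀ i ∈ Finset.range (m'+1), (-1:ℂ)^i * q ^ (t (i+1) s) * qbinR q m' i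
      = (-1:ℂ)^i * q ^ (t i (s-1)) * qbinR q m' i := by
    intro i _
    rw [tlem2 hs i]
  rw [Finset.sum_congr rfl h1, Finset.sum_congr rfl h2, ← Finset.mul_sum]
  rw [show m' + 1 - 1 = m' by omega, V]
  ring

lemma Vzero (hq : ∀ k : ℕ, 1 ≤ k → q ^ k ≠ 1) : ∀ s m : ℕ, s < m → V q m s = 0 := by
  intro s
  induction s with
  | zero => intro m hm; exact Wzero hq (by omega)
  | succ s ih =>
    intro m hm
    rw [Vrec hq (by omega) (by omega), show s + 1 - 1 = s by omega, ih (m-1) (by omega)]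
    ring

noncomputable def alph (q : ℂ) (p k : ℕ) : ℂ :=
  (-1)^k * q ^ (k*(k-1)/2 + p*(k^2+k)) * (1 - q^(2*k+1)) / (1-q)

lemma unit (hq : ∀ k : ℕ, 1 ≤ k → q ^ k ≠ 1) (n : ℕ) :
    (if n = 0 then (1:ℂ) else 0)
      = ∑ k ∈ Finset.range (n+1), alph q 0 k / (qPoch q q (n-k) * qPoch (q^2) q (n+k)) := by
  rcases Nat.eq_zero_or_pos n with rfl | hn
  · rw [if_pos rfl, Finset.sum_range_one, alph]
    norm_num [qPoch_zero]
    exact (div_self (one_sub_q_ne hq)).symm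
  · rw [if_neg (by omega)]
    have hV := Vzero hq (n+1) (2*n+1) (by omega)
    have key : V q (2*n+1) (n+1)
        = ((-1:ℂ)^(n+1) * qPoch q q (2*n+1))
          * ∑ k ∈ Finset.range (n+1), alph q 0 k / (qPoch q q (n-k) * qPoch (q^2) q (n+k)) := by
      rw [V, show 2*n+1+1 = (n+1)+(n+1) by omega, Finset.sum_range_add]
      rw [← Finset.sum_range_reflect (fun i => (-1:ℂ)^i * q ^ (t i (n+1)) * qbinR q (2*n+1) i) (n+1)]
      rw [← Finset.sum_add_distrib, Finset.mul_sum]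
      refine Finset.sum_congr rfl fun k hk => ?_
      rw [Finset.mem_range] at hk
      have hk' : k ≤ n := by omega
      have i1 : n + 1 - 1 - k = n - k := by omega
      rw [i1]
      have t1 : t (n+1+k) (n+1) = k.choose 2 := by
        rw [t, show n+1+k-(n+1) = k by omega, show (n+1)-(n+1+k)+1 = 1 by omega]
        simp
      have t2 : t (n-k) (n+1) = (k+2).choose 2 := by
        rw [t, show n-k-(n+1) = 0 by omega, show (n+1)-(n-k)+1 = k+2 by omega]
        simp
      rw [t1, t2, qbinR, qbinR, show 2*n+1-(n+1+k) = n-k by omega,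
        show 2*n+1-(n-k) = n+1+k by omega, alph]
      have hc2 : k*(k-1)/2 + 0*(k^2+k) = k.choose 2 := by
        rw [Nat.choose_two_right]; omega
      rw [hc2]
      have hexp : (k+2).choose 2 = k.choose 2 + (2*k+1) := by
        have h0 : (k+2).choose 2 = (k+1+1).choose 2 := rfl
        have h1 := choose2_succ (k+1)
        have h2 := choose2_succ k
        omega
      rw [hexp, pow_add]
      have hsign1 : ((-1:ℂ))^(n+1+k) = -(-1:ℂ)^(n-k) := by
        rw [show n+1+k = (n-k)+(2*k+1) by omega, pow_add, pow_succ, pow_mul]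
        norm_num
      have hsign2 : ((-1:ℂ))^(n+1) = -((-1:ℂ)^(n-k) * (-1:ℂ)^k) := by
        rw [← pow_add, show n-k+k = n by omega, pow_succ]
        ring
      rw [hsign1, hsign2]
      have hPQ2 : qPoch q q (n+1+k) = (1-q) * qPoch (q^2) q (n+k) := by
        rw [show n+1+k = (n+k)+1 by omega, PQ]
      rw [hPQ2]
      have hA := P_ne hq (n-k)
      have hB := Q_ne hq (n+k)
      have hC := one_sub_q_ne hq
      have hkk : ((-1:ℂ))^(k*2) = 1 := by
        rw [mul_comm, pow_mul]; norm_num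
      field_simp
      ring_nf
      rw [hkk]
      ring_nf
    rw [hV] at key
    have hc : ((-1:ℂ)^(n+1) * qPoch q q (2*n+1)) ≠ 0 := by
      apply mul_ne_zero
      · exact pow_ne_zero _ (by norm_num)
      · exact P_ne hq _
    rcases mul_eq_zero.mp key.symm with h | h
    · exact absurd h hc
    · exact h.symm

lemma keyA (hq : ∀ k : ℕ, 1 ≤ k → q ^ k ≠ 1) :
    ∀ m : ℕ, ∀ x : ℂ,
      ∑ j ∈ Finset.range (m+1),
        q ^ (j^2) * x ^ j * qbinR q m j * qPoch (x * q ^ (j+1)) q (m-j) = 1 := by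
  intro m
  induction m with
  | zero =>
    intro x
    simp [qbinR_zero hq, qPoch_zero]
  | succ m ih =>
    intro x
    have key : ∀ j ∈ Finset.range (m+2),
        q ^ (j^2) * x ^ j * qbinR q (m+1) j * qPoch (x * q ^ (j+1)) q (m+1-j)
          = (if j ≤ m then
              q ^ (j^2) * x ^ j * qbinR q m j * qPoch (x * q ^ (j+1)) q (m-j) * (1 - x * q^(m+1))
             else 0)
            + (if j = 0 then 0 else
              q ^ (j^2) * x ^ j * q ^ (m+1-j) * qbinR q m (j-1) * qPoch (x * q ^ (j+1)) q (m+1-j)) := by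
      intro j hj
      rw [Finset.mem_range] at hj
      have hsplit : ∀ (hle : j ≤ m), qPoch (x * q ^ (j+1)) q (m+1-j)
          = qPoch (x * q ^ (j+1)) q (m-j) * (1 - x * q^(m+1)) := by
        intro hle
        rw [show m+1-j = (m-j)+1 by omega, qPoch_succ]
        congr 2
        rw [mul_assoc, ← pow_add, show j+1+(m-j) = m+1 by omega]
      rcases Nat.eq_zero_or_pos j with rfl | hpos
      · rw [if_pos (by omega), if_pos rfl, add_zero, qbinR_zero hq, qbinR_zero hq,
          hsplit (by omega)]
        ring
      rcases Nat.lt_or_ge j (m+1) with hlt | hge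
      · have hle : j ≤ m := by omega
        rw [if_pos hle, if_neg (by omega), pascal1 hq hpos hle, hsplit hle]
        ring
      · have : j = m + 1 := by omega
        subst this
        rw [if_neg (by omega), if_neg (by omega), qbinR_self hq,
          show m+1-1 = m by omega, qbinR_self hq, show m+1-(m+1) = 0 by omega, pow_zero]
        ring
    rw [Finset.sum_congr rfl key, Finset.sum_add_distrib]
    have h1 : ∑ j ∈ Finset.range (m+2), (if j ≤ m then
              q ^ (j^2) * x ^ j * qbinR q m j * qPoch (x * q ^ (j+1)) q (m-j) * (1 - x * q^(m+1))
             else 0)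
        = 1 - x * q^(m+1) := by
      rw [Finset.sum_range_succ, if_neg (by omega), add_zero]
      have : ∀ j ∈ Finset.range (m+1), (if j ≤ m then
              q ^ (j^2) * x ^ j * qbinR q m j * qPoch (x * q ^ (j+1)) q (m-j) * (1 - x * q^(m+1))
             else 0)
          = (q ^ (j^2) * x ^ j * qbinR q m j * qPoch (x * q ^ (j+1)) q (m-j)) * (1 - x * q^(m+1)) := by
        intro j hj
        rw [Finset.mem_range] at hj
        rw [if_pos (by omega)]
      rw [Finset.sum_congr rfl this, ← Finset.sum_mul, ih x, one_mul]
    have h2 : ∑ j ∈ Finset.range (m+2), (if j = 0 then 0 else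
              q ^ (j^2) * x ^ j * q ^ (m+1-j) * qbinR q m (j-1) * qPoch (x * q ^ (j+1)) q (m+1-j))
        = x * q^(m+1) := by
      rw [Finset.sum_range_succ', if_pos rfl, add_zero]
      have : ∀ i ∈ Finset.range (m+1), (if i + 1 = 0 then 0 else
              q ^ ((i+1)^2) * x ^ (i+1) * q ^ (m+1-(i+1)) * qbinR q m (i+1-1)
                * qPoch (x * q ^ (i+1+1)) q (m+1-(i+1)))
          = (x * q^(m+1)) *
            (q ^ (i^2) * (x*q) ^ i * qbinR q m i * qPoch ((x*q) * q ^ (i+1)) q (m-i)) := by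
        intro i hi
        rw [Finset.mem_range] at hi
        rw [if_neg (by omega), show i+1-1 = i by omega, show m+1-(i+1) = m-i by omega]
        have e1 : qPoch (x * q ^ (i+1+1)) q (m-i) = qPoch ((x*q) * q ^ (i+1)) q (m-i) := by
          congr 1
          rw [pow_add, pow_add]
          ring
        rw [e1]
        have eexp : (i+1)^2 + (m-i) = (m+1) + (i^2 + i) := by
          have : (i+1)^2 = i^2 + 2*i + 1 := by ring
          omega
        have e2 : q ^ ((i+1)^2) * x ^ (i+1) * q ^ (m-i)
            = (x * q^(m+1)) * (q ^ (i^2) * (x*q) ^ i) := by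
          calc q ^ ((i+1)^2) * x ^ (i+1) * q ^ (m-i)
              = x^(i+1) * q^((i+1)^2 + (m-i)) := by rw [pow_add]; ring
            _ = x^(i+1) * q^((m+1) + (i^2+i)) := by rw [eexp]
            _ = (x * q^(m+1)) * (q ^ (i^2) * (x*q) ^ i) := by
                rw [pow_add, pow_add, mul_pow]; ring
        calc q ^ ((i+1)^2) * x ^ (i+1) * q ^ (m-i) * qbinR q m i * qPoch ((x*q) * q ^ (i+1)) q (m-i)
            = (x * q^(m+1)) * (q ^ (i^2) * (x*q) ^ i) * qbinR q m i * qPoch ((x*q) * q ^ (i+1)) q (m-i) := by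
              rw [e2]
          _ = (x * q^(m+1)) * (q ^ (i^2) * (x*q) ^ i * qbinR q m i * qPoch ((x*q) * q ^ (i+1)) q (m-i)) := by
              ring
      rw [Finset.sum_congr rfl this, ← Finset.mul_sum, ih (x*q), mul_one]
    rw [h1, h2]
    ring

lemma star (hq : ∀ k : ℕ, 1 ≤ k → q ^ k ≠ 1) {n k : ℕ} (hk : k ≤ n) :
    ∑ r ∈ Finset.Ico k (n+1),
        q^(r^2+r) / (qPoch q q (n-r) * (qPoch q q (r-k) * qPoch (q^2) q (r+k)))
      = q^(k^2+k) / (qPoch q q (n-k) * qPoch (q^2) q (n+k)) := by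
  rw [Finset.sum_Ico_eq_sum_range, show n + 1 - k = (n-k) + 1 by omega]
  set m := n - k with hm
  have hterm : ∀ j ∈ Finset.range (m+1),
      q^((k+j)^2+(k+j)) / (qPoch q q (n-(k+j)) * (qPoch q q (k+j-k) * qPoch (q^2) q (k+j+k)))
        = (q^(k^2+k) / (qPoch q q m * qPoch (q^2) q (2*k+m)))
          * (q ^ (j^2) * (q^(2*k+1)) ^ j * qbinR q m j * qPoch ((q^(2*k+1)) * q ^ (j+1)) q (m-j)) := by
    intro j hj
    rw [Finset.mem_range] at hj
    have hj' : j ≤ m := by omega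
    rw [show k+j-k = j by omega, show n-(k+j) = m-j by omega, show k+j+k = 2*k+j by omega]
    have eexp : (k+j)^2 + (k+j) = (k^2+k) + j^2 + (2*k+1)*j := by ring
    have epoch : qPoch ((q^(2*k+1)) * q ^ (j+1)) q (m-j) = qPoch (q^2 * q^(2*k+j)) q (m-j) := by
      congr 1
      rw [← pow_add, ← pow_add, show 2*k+1+(j+1) = 2+(2*k+j) by omega, pow_add]
    have eQ : qPoch (q^2) q (2*k+m) = qPoch (q^2) q (2*k+j) * qPoch (q^2 * q^(2*k+j)) q (m-j) := by
      rw [← qPoch_add, show 2*k+j+(m-j) = 2*k+m by omega]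
    rw [epoch, eQ, qbinR, eexp, pow_add, pow_add, ← pow_mul]
    have h1 := P_ne hq (m-j)
    have h2 := P_ne hq j
    have h3 := P_ne hq m
    have h4 := Q_ne hq (2*k+j)
    have h5 : qPoch (q^2 * q^(2*k+j)) q (m-j) ≠ 0 := by
      rw [show q^2 * q^(2*k+j) = q^(2*k+j+2) by rw [← pow_add]; ring_nf]
      exact pow_ne hq (by omega) _
    field_simp
  rw [Finset.sum_congr rfl hterm, ← Finset.mul_sum, keyA hq m (q^(2*k+1)), mul_one]
  rw [show 2*k+m = n+k by omega]

lemma step (hq : ∀ k : ℕ, 1 ≤ k → q ^ k ≠ 1) (a b : ℕ → ℂ)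
    (hpair : ∀ n, b n = ∑ k ∈ Finset.range (n+1),
        a k / (qPoch q q (n-k) * qPoch (q^2) q (n+k)))
    (n : ℕ) :
    ∑ r ∈ Finset.range (n+1), q^(r^2+r) * b r / qPoch q q (n-r)
      = ∑ k ∈ Finset.range (n+1),
          q^(k^2+k) * a k / (qPoch q q (n-k) * qPoch (q^2) q (n+k)) := by
  have hL : ∀ r ∈ Finset.range (n+1),
      q^(r^2+r) * b r / qPoch q q (n-r)
        = ∑ k ∈ Finset.Ico 0 (r+1),
            a k * (q^(r^2+r) / (qPoch q q (n-r) * (qPoch q q (r-k) * qPoch (q^2) q (r+k)))) := by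
    intro r _
    rw [hpair r, ← Finset.range_eq_Ico, Finset.mul_sum, Finset.sum_div]
    refine Finset.sum_congr rfl fun k _ => ?_
    ring
  rw [Finset.sum_congr rfl hL, Finset.range_eq_Ico, ← Finset.sum_Ico_Ico_comm]
  rw [← Finset.range_eq_Ico]
  refine Finset.sum_congr rfl fun k hk => ?_
  rw [Finset.mem_range] at hk
  rw [← Finset.mul_sum, star hq (by omega : k ≤ n)]
  ring

noncomputable def bb (q : ℂ) : ℕ → ℕ → ℂ
  | 0, n => if n = 0 then 1 else 0
  | (p+1), n => ∑ r ∈ Finset.range (n+1), q^(r^2+r) * bb q p r / qPoch q q (n-r)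

lemma bailey (hq : ∀ k : ℕ, 1 ≤ k → q ^ k ≠ 1) :
    ∀ p n, bb q p n = ∑ k ∈ Finset.range (n+1),
      alph q p k / (qPoch q q (n-k) * qPoch (q^2) q (n+k)) := by
  intro p
  induction p with
  | zero => intro n; exact unit hq n
  | succ p ih =>
    intro n
    show (∑ r ∈ Finset.range (n+1), q^(r^2+r) * bb q p r / qPoch q q (n-r)) = _
    rw [step hq (alph q p) (bb q p) ih n]
    refine Finset.sum_congr rfl fun k _ => ?_
    have hnum : q^(k^2+k) * alph q p k = alph q (p+1) k := by
      rw [alph, alph]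
      have he : k*(k-1)/2 + (p+1)*(k^2+k) = (k^2+k) + (k*(k-1)/2 + p*(k^2+k)) := by
        generalize k*(k-1)/2 = c
        ring
      rw [he, pow_add]
      ring
    rw [← hnum]

/-- The `nn` function of the statement. -/
def nnv {p n : ℕ} (f : Fin p → Fin (n+1)) (i : ℕ) : ℕ :=
  if h : i - 1 < p then (f ⟨i-1, h⟩ : ℕ) else 0

lemma nnv_eq {p n : ℕ} (f : Fin p → Fin (n+1)) {i j : ℕ} (hj : j < p) (h : i - 1 = j) :
    nnv f i = (f ⟨j, hj⟩ : ℕ) := by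
  subst h
  rw [nnv, dif_pos hj]


def toG (p' n r : ℕ) (hr : r < n+1) (f : Fin (p'+2) → Fin (n+1)) : Fin (p'+1) → Fin (r+1) :=
  fun k => ⟨min ((f ⟨(k:ℕ), by omega⟩ : Fin (n+1)) : ℕ) r, by omega⟩

def toF (p' n r : ℕ) (hr : r < n+1) (g : Fin (p'+1) → Fin (r+1)) : Fin (p'+2) → Fin (n+1) :=
  fun k => if h : (k:ℕ) < p'+1 then
      ⟨(g ⟨(k:ℕ), h⟩ : ℕ), by have := (g ⟨(k:ℕ), h⟩).isLt; omega⟩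
    else ⟨n, by omega⟩

lemma toG_val {p' n r : ℕ} (hr : r < n+1) (f : Fin (p'+2) → Fin (n+1)) (k : Fin (p'+1))
    {a : ℕ} (ha : a < p'+2) (hak : a = (k:ℕ)) :
    ((toG p' n r hr f k : Fin (r+1)) : ℕ) = min ((f ⟨a, ha⟩ : Fin (n+1)) : ℕ) r := by
  subst hak
  rfl

lemma toF_val_lt {p' n r : ℕ} (hr : r < n+1) (g : Fin (p'+1) → Fin (r+1)) (k : Fin (p'+2))
    {a : ℕ} (ha : a < p'+1) (hak : a = (k:ℕ)) :
    ((toF p' n r hr g k : Fin (n+1)) : ℕ) = ((g ⟨a, ha⟩ : Fin (r+1)) : ℕ) := by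
  subst hak
  rw [toF, dif_pos ha]

lemma toF_val_last {p' n r : ℕ} (hr : r < n+1) (g : Fin (p'+1) → Fin (r+1)) (k : Fin (p'+2))
    (hk : ¬ ((k:ℕ) < p'+1)) :
    ((toF p' n r hr g k : Fin (n+1)) : ℕ) = n := by
  rw [toF, dif_neg hk]

lemma nnv_toG {p' n r : ℕ} (hr : r < n+1) (f : Fin (p'+2) → Fin (n+1)) {j : ℕ}
    (h1 : 1 ≤ j) (h2 : j ≤ p'+1) :
    nnv (toG p' n r hr f) j = min (nnv f j) r := by
  rw [nnv_eq (toG p' n r hr f) (show j - 1 < p'+1 by omega) rfl,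
    nnv_eq f (show j - 1 < p'+2 by omega) rfl,
    toG_val hr f _ (show j - 1 < p'+2 by omega) rfl]

set_option maxHeartbeats 1000000 in
lemma fiber_eq (hq : ∀ k : ℕ, 1 ≤ k → q ^ k ≠ 1) (p' n r : ℕ) (hr : r < n + 1)
    (ih : ∑ g ∈ Finset.univ.filter
        (fun g : Fin (p'+1) → Fin (r+1) =>
          (∀ i j, i ≤ j → g i ≤ g j) ∧ ((g ⟨p', by omega⟩ : Fin (r+1)) : ℕ) = r),
      ∏ j ∈ Finset.Icc 1 p', q ^ (nnv g j ^ 2 + nnv g j) * qbinR q (nnv g (j+1)) (nnv g j)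
      = qPoch q q r * bb q (p'+1) r) :
    ∑ f ∈ (Finset.univ.filter
        (fun f : Fin (p'+2) → Fin (n+1) =>
          (∀ i j, i ≤ j → f i ≤ f j) ∧ ((f ⟨p'+1, by omega⟩ : Fin (n+1)) : ℕ) = n)).filter
        (fun f => ((f ⟨p', by omega⟩ : Fin (n+1)) : ℕ) = r),
      ∏ j ∈ Finset.Icc 1 (p'+1), q ^ (nnv f j ^ 2 + nnv f j) * qbinR q (nnv f (j+1)) (nnv f j)
    = q^(r^2+r) * qbinR q n r * (qPoch q q r * bb q (p'+1) r) := by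
  have hble : ∀ f : Fin (p'+2) → Fin (n+1), (∀ i j, i ≤ j → f i ≤ f j) →
      ((f ⟨p', by omega⟩ : Fin (n+1)) : ℕ) = r →
      ∀ a : ℕ, ∀ ha : a < p' + 1, ((f ⟨a, by omega⟩ : Fin (n+1)) : ℕ) ≤ r := by
    intro f hmono hfr a ha
    have h := hmono ⟨a, by omega⟩ ⟨p', by omega⟩ (by rw [Fin.mk_le_mk]; omega)
    rw [Fin.le_def] at h
    rw [← hfr]
    exact h
  have hsplit : ∀ f ∈ (Finset.univ.filter
        (fun f : Fin (p'+2) → Fin (n+1) =>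
          (∀ i j, i ≤ j → f i ≤ f j) ∧ ((f ⟨p'+1, by omega⟩ : Fin (n+1)) : ℕ) = n)).filter
        (fun f => ((f ⟨p', by omega⟩ : Fin (n+1)) : ℕ) = r),
      (∏ j ∈ Finset.Icc 1 (p'+1), q ^ (nnv f j ^ 2 + nnv f j) * qbinR q (nnv f (j+1)) (nnv f j))
        = (∏ j ∈ Finset.Icc 1 p', q ^ (nnv f j ^ 2 + nnv f j) * qbinR q (nnv f (j+1)) (nnv f j))
          * (q^(r^2+r) * qbinR q n r) := by
    intro f hf
    obtain ⟨hf0, hfr⟩ := Finset.mem_filter.1 hf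
    obtain ⟨-, hmono, htop⟩ := Finset.mem_filter.1 hf0
    rw [Finset.prod_Icc_succ_top (by omega : 1 ≤ p'+1)]
    congr 1
    have e1 : nnv f (p'+1) = r := by
      rw [nnv_eq f (show p' < p'+2 by omega) (show p'+1-1 = p' by omega)]
      exact hfr
    have e2 : nnv f (p'+1+1) = n := by
      rw [nnv_eq f (show p'+1 < p'+2 by omega) (show p'+1+1-1 = p'+1 by omega)]
      exact htop
    rw [e1, e2]
  rw [Finset.sum_congr rfl hsplit, ← Finset.sum_mul]
  have hbij : ∑ f ∈ (Finset.univ.filter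
        (fun f : Fin (p'+2) → Fin (n+1) =>
          (∀ i j, i ≤ j → f i ≤ f j) ∧ ((f ⟨p'+1, by omega⟩ : Fin (n+1)) : ℕ) = n)).filter
        (fun f => ((f ⟨p', by omega⟩ : Fin (n+1)) : ℕ) = r),
      (∏ j ∈ Finset.Icc 1 p', q ^ (nnv f j ^ 2 + nnv f j) * qbinR q (nnv f (j+1)) (nnv f j))
      = ∑ g ∈ Finset.univ.filter
        (fun g : Fin (p'+1) → Fin (r+1) =>
          (∀ i j, i ≤ j → g i ≤ g j) ∧ ((g ⟨p', by omega⟩ : Fin (r+1)) : ℕ) = r),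
      ∏ j ∈ Finset.Icc 1 p', q ^ (nnv g j ^ 2 + nnv g j) * qbinR q (nnv g (j+1)) (nnv g j) := by
    refine Finset.sum_bij' (fun f _ => toG p' n r hr f) (fun g _ => toF p' n r hr g)
      ?_ ?_ ?_ ?_ ?_
    · -- maps into t
      intro f hf
      obtain ⟨hf0, hfr⟩ := Finset.mem_filter.1 hf
      obtain ⟨-, hmono, htop⟩ := Finset.mem_filter.1 hf0
      refine Finset.mem_filter.2 ⟨Finset.mem_univ _, ?_, ?_⟩
      · intro a b hab
        rw [Fin.le_def, toG_val hr f a (by omega) rfl, toG_val hr f b (by omega) rfl]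
        have h := hmono ⟨(a:ℕ), by omega⟩ ⟨(b:ℕ), by omega⟩
          (by rw [Fin.mk_le_mk]; exact Fin.le_def.1 hab)
        rw [Fin.le_def] at h
        exact min_le_min h le_rfl
      · rw [toG_val hr f _ (show p' < p'+2 by omega) rfl, hfr, min_self]
    · -- maps back into s
      intro g hg
      obtain ⟨-, hgmono, hgtop⟩ := Finset.mem_filter.1 hg
      refine Finset.mem_filter.2 ⟨Finset.mem_filter.2 ⟨Finset.mem_univ _, ?_, ?_⟩, ?_⟩
      · intro a b hab
        rw [Fin.le_def]
        by_cases hb : (b:ℕ) < p'+1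
        · have ha : (a:ℕ) < p'+1 := by have := Fin.le_def.1 hab; omega
          rw [toF_val_lt hr g a ha rfl, toF_val_lt hr g b hb rfl]
          have h := hgmono ⟨(a:ℕ), ha⟩ ⟨(b:ℕ), hb⟩
            (by rw [Fin.mk_le_mk]; exact Fin.le_def.1 hab)
          exact Fin.le_def.1 h
        · by_cases ha : (a:ℕ) < p'+1
          · rw [toF_val_lt hr g a ha rfl, toF_val_last hr g b hb]
            have := (g ⟨(a:ℕ), ha⟩).isLt
            omega
          · rw [toF_val_last hr g a ha, toF_val_last hr g b hb]
      · rw [toF_val_last hr g _ (by show ¬ (p'+1 < p'+1); omega)]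
      · rw [toF_val_lt hr g _ (show (p':ℕ) < p'+1 by omega) rfl]
        exact hgtop
    · -- left inverse
      intro f hf
      obtain ⟨hf0, hfr⟩ := Finset.mem_filter.1 hf
      obtain ⟨-, hmono, htop⟩ := Finset.mem_filter.1 hf0
      funext k
      apply Fin.ext
      by_cases hk : (k:ℕ) < p'+1
      · rw [toF_val_lt hr (toG p' n r hr f) k hk rfl,
          toG_val hr f _ (show (k:ℕ) < p'+2 by omega) rfl]
        have hle := hble f hmono hfr (k:ℕ) hk
        have hmk : (⟨(k:ℕ), show (k:ℕ) < p'+2 by omega⟩ : Fin (p'+2)) = k := Fin.ext rfl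
        rw [hmk] at hle ⊢
        omega
      · rw [toF_val_last hr (toG p' n r hr f) k hk]
        have hk2 := k.isLt
        have hmk : k = (⟨p'+1, by omega⟩ : Fin (p'+2)) := Fin.ext (by show (k:ℕ) = p'+1; omega)
        rw [hmk]
        exact htop.symm
    · -- right inverse
      intro g hg
      funext k
      apply Fin.ext
      rw [toG_val hr (toF p' n r hr g) k (by omega) rfl,
        toF_val_lt hr g _ (show (k:ℕ) < p'+1 from k.isLt) rfl]
      have hmk : (⟨(k:ℕ), k.isLt⟩ : Fin (p'+1)) = k := Fin.ext rfl
      rw [hmk]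
      have := (g k).isLt
      omega
    · -- terms agree
      intro f hf
      obtain ⟨hf0, hfr⟩ := Finset.mem_filter.1 hf
      obtain ⟨-, hmono, htop⟩ := Finset.mem_filter.1 hf0
      refine Finset.prod_congr rfl fun j hj => ?_
      rw [Finset.mem_Icc] at hj
      obtain ⟨hj1, hj2⟩ := hj
      have hnv : ∀ i : ℕ, 1 ≤ i → i ≤ p'+1 → nnv (toG p' n r hr f) i = nnv f i := by
        intro i h1 h2
        rw [nnv_toG hr f h1 h2, nnv_eq f (show i - 1 < p'+2 by omega) rfl]
        exact min_eq_left (hble f hmono hfr (i-1) (by omega))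
      rw [hnv j (by omega) (by omega), hnv (j+1) (by omega) (by omega)]
  rw [hbij, ih]
  ring

set_option maxHeartbeats 1000000 in
lemma main (hq : ∀ k : ℕ, 1 ≤ k → q ^ k ≠ 1) (p : ℕ) (hp : 1 ≤ p) : ∀ n : ℕ,
    (∑ f ∈ Finset.univ.filter
        (fun f : Fin p → Fin (n+1) =>
          (∀ i j, i ≤ j → f i ≤ f j) ∧ ((f ⟨p-1, Nat.sub_lt hp Nat.one_pos⟩ : Fin (n+1)) : ℕ) = n),
      ∏ j ∈ Finset.Icc 1 (p-1),
        q ^ (nnv f j ^ 2 + nnv f j) * qbinR q (nnv f (j+1)) (nnv f j))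
      = qPoch q q n * bb q p n := by
  induction p, hp using Nat.le_induction with
  | base =>
    intro n
    simp only [Nat.sub_self]
    rw [show Finset.Icc 1 0 = (∅ : Finset ℕ) from Finset.Icc_eq_empty (by omega)]
    simp only [Finset.prod_empty]
    rw [Finset.sum_const, nsmul_eq_mul, mul_one]
    have hbb1 : qPoch q q n * bb q 1 n = 1 := by
      have hbbs : bb q 1 n
          = ∑ r ∈ Finset.range (n+1), q^(r^2+r) * bb q 0 r / qPoch q q (n-r) := by
        show bb q (0+1) n = _
        rw [bb]
      rw [hbbs, Finset.sum_eq_single_of_mem 0 (Finset.mem_range.2 (by omega))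
        (fun r _ hr => by
          rw [show bb q 0 r = 0 by rw [bb]; exact if_neg hr, mul_zero, zero_div])]
      rw [show bb q 0 0 = 1 by rw [bb]; rfl]
      simp only [Nat.sub_zero, pow_zero, mul_one]
      rw [show (0:ℕ)^2 + 0 = 0 by omega, pow_zero]
      exact mul_one_div_cancel (P_ne hq n)
    have hcard : (Finset.univ.filter (fun f : Fin 1 → Fin (n+1) =>
        (∀ i j, i ≤ j → f i ≤ f j) ∧ ((f ⟨0, by omega⟩ : Fin (n+1)) : ℕ) = n)).card = 1 := by
      rw [Finset.card_eq_one]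
      refine ⟨fun _ => ⟨n, by omega⟩, ?_⟩
      ext f
      simp only [Finset.mem_filter, Finset.mem_univ, true_and, Finset.mem_singleton]
      constructor
      · rintro ⟨-, hval⟩
        funext i
        have hi : i = ⟨0, by omega⟩ := Fin.ext (by have := i.isLt; omega)
        rw [hi]
        exact Fin.ext hval
      · rintro rfl
        exact ⟨fun i j _ => le_rfl, rfl⟩
    rw [hcard, hbb1, Nat.cast_one]
  | succ p hp ih =>
    intro n
    obtain ⟨p', rfl⟩ : ∃ p', p = p' + 1 := ⟨p - 1, by omega⟩
    simp only [Nat.add_sub_cancel] at ih ⊢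
    rw [← Finset.sum_fiberwise_of_maps_to
      (g := fun f : Fin (p'+1+1) → Fin (n+1) => ((f ⟨p', by omega⟩ : Fin (n+1)) : ℕ))
      (t := Finset.range (n+1)) (fun f _ => Finset.mem_range.2 (Fin.is_lt _))]
    refine Eq.trans (Finset.sum_congr rfl fun r hr =>
      fiber_eq hq p' n r (Finset.mem_range.1 hr) (ih r)) ?_
    have hbbs : bb q (p'+1+1) n
        = ∑ r ∈ Finset.range (n+1), q^(r^2+r) * bb q (p'+1) r / qPoch q q (n-r) := by
      rw [bb]
    rw [hbbs, Finset.mul_sum]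
    refine Finset.sum_congr rfl fun r hr => ?_
    rw [Finset.mem_range] at hr
    rw [qbinR]
    have h1 := P_ne hq n
    have h2 := P_ne hq (n-r)
    have h3 := P_ne hq r
    field_simp

end St15

set_option maxHeartbeats 1000000 in
theorem stmt15 (q : ℂ) (hq : ∀ k : ℕ, 1 ≤ k → q ^ k ≠ 1) (p : ℕ) (hp : 1 ≤ p) (n : ℕ) :
    (1 / qPoch q q n) *
      ∑ f ∈ Finset.univ.filter
          (fun f : Fin p → Fin (n+1) =>
            (∀ i j, i ≤ j → f i ≤ f j) ∧ (f ⟨p-1, by omega⟩ : ℕ) = n),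
        (fun nn : ℕ → ℕ =>
          ∏ j ∈ Finset.Icc 1 (p-1),
            q ^ (nn j ^ 2 + nn j) * qbinR q (nn (j+1)) (nn j))
        (fun i => if h : i - 1 < p then (f ⟨i-1, h⟩ : ℕ) else 0)
    = ∑ k ∈ Finset.range (n+1),
        ((-1 : ℂ) ^ k * q ^ (k*(k-1)/2 + p*(k^2+k)) * (1 - q ^ (2*k+1)) / (1 - q)) /
          (qPoch q q (n-k) * qPoch (q^2) q (n+k)) := by
  have h := St15.main hq p hp n
  have hb := St15.bailey hq p n
  have hP := St15.P_ne hq n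
  calc (1 / qPoch q q n) *
      ∑ f ∈ Finset.univ.filter
          (fun f : Fin p → Fin (n+1) =>
            (∀ i j, i ≤ j → f i ≤ f j) ∧ (f ⟨p-1, by omega⟩ : ℕ) = n),
        (fun nn : ℕ → ℕ =>
          ∏ j ∈ Finset.Icc 1 (p-1),
            q ^ (nn j ^ 2 + nn j) * qbinR q (nn (j+1)) (nn j))
        (fun i => if h : i - 1 < p then (f ⟨i-1, h⟩ : ℕ) else 0)
      = (1 / qPoch q q n) * (qPoch q q n * St15.bb q p n) := by rw [← h]; rfl
    _ = St15.bb q p n := by field_simp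
    _ = _ := by rw [hb]; rfl
end

section
/- Let q be a nonzero complex number that is not a root of unity. Then for every integer p (positive or negative) and every integer n ≥ 0, c_{p,n}(1/q) = (−1)^n q^{n(n+3)/2} c_{−p,n}(q). -/
/-- `c_{p,n}(q) = (q;q)_n Σ_{k=0}^n (-1)^k q^{binom(k,2)+p(k²+k)} (1-q^{2k+1}) /
((q;q)_{n-k}(q;q)_{n+k+1})`. -/
noncomputable def cpn (p : ℤ) (n : ℕ) (q : ℂ) : ℂ :=
  qPoch q q n *
    ∑ k ∈ Finset.range (n+1),
      (-1 : ℂ) ^ k * q ^ (((k*(k-1)/2 : ℕ) : ℤ) + p * ((k : ℤ)^2 + (k : ℤ))) *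
        (1 - q ^ (2*k+1)) / (qPoch q q (n-k) * qPoch q q (n+k+1))

lemma tri_cast (m : ℕ) : ((m*(m+1)/2 : ℕ) : ℤ) * 2 = (m:ℤ) * ((m:ℤ)+1) := by
  have h := Nat.div_mul_cancel (Nat.even_mul_succ_self m).two_dvd
  exact_mod_cast congrArg (Nat.cast : ℕ → ℤ) h

lemma tri_cast' (k : ℕ) : ((k*(k-1)/2 : ℕ) : ℤ) * 2 = (k:ℤ) * ((k:ℤ)-1) := by
  cases k with
  | zero => simp
  | succ m =>
    have h : Even ((m+1)*m) := by rw [mul_comm]; exact Nat.even_mul_succ_self m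
    have h2 := Nat.div_mul_cancel h.two_dvd
    have := congrArg (Nat.cast : ℕ → ℤ) h2
    push_cast at this ⊢
    linarith

lemma qPoch_ne_zero (q : ℂ) (hq : ∀ k : ℕ, 1 ≤ k → q ^ k ≠ 1) (m : ℕ) :
    qPoch q q m ≠ 0 := by
  unfold qPoch
  apply Finset.prod_ne_zero_iff.mpr
  intro k _ h
  apply hq (k+1) (by omega)
  have : q * q ^ k = 1 := by linear_combination -h
  rw [pow_succ']; exact this

lemma qPoch_one_div (q : ℂ) (hq0 : q ≠ 0) (m : ℕ) :
    qPoch (1/q) (1/q) m = (-1)^m * q ^ (-((m*(m+1)/2 : ℕ) : ℤ)) * qPoch q q m := by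
  induction m with
  | zero => simp [qPoch]
  | succ m ih =>
    simp only [qPoch] at ih ⊢
    rw [Finset.prod_range_succ, Finset.prod_range_succ, ih]
    have hpow : (q : ℂ)^(m+1) ≠ 0 := pow_ne_zero _ hq0
    have hv : q * q^m = q^(m+1) := (pow_succ' q m).symm
    have h1 : (1:ℂ) - (1/q) * (1/q)^m = -(q^(m+1))⁻¹ * (1 - q * q^m) := by
      rw [one_div, ← pow_succ', inv_pow, hv]
      field_simp
      ring
    rw [h1]
    have h2 : ((q^(m+1) : ℂ))⁻¹ = q ^ (-((m+1 : ℕ) : ℤ)) := by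
      rw [zpow_neg, zpow_natCast]
    rw [h2]
    have h3 : q ^ (-((m*(m+1)/2 : ℕ) : ℤ)) * q ^ (-((m+1:ℕ):ℤ))
        = q ^ (-(((m+1)*((m+1)+1)/2 : ℕ):ℤ)) := by
      rw [← zpow_add₀ hq0]
      congr 1
      have e1 : (m+1)*((m+1)+1) = m*(m+1) + 2*(m+1) := by ring
      obtain ⟨t, ht⟩ := Nat.even_mul_succ_self m
      have e2 : (m+1)*((m+1)+1)/2 = m*(m+1)/2 + (m+1) := by omega
      rw [e2]; push_cast; ring
    rw [← h3]; ring

lemma key (c u Y Z x1 x2 x3 x4 xS x5 : ℂ) (n k : ℕ) (hk : k ≤ n)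
    (h3 : x3 ≠ 0) (h4 : x4 ≠ 0) (hY : Y ≠ 0) (hZ : Z ≠ 0)
    (hx : x1 * x2 = xS * x5 * x3 * x4) :
    c * x1 * (-x2 * u) / ((-1)^(n-k) * x3 * Y * ((-1)^(n+k+1) * x4 * Z)) =
    xS * (c * x5 * u / (Y * Z)) := by
  have hsign : ((-1:ℂ))^(n-k) * (-1)^(n+k+1) = -1 := by
    rw [← pow_add]
    have h : (n-k) + (n+k+1) = 2*n+1 := by omega
    rw [h, pow_succ, pow_mul]
    norm_num
  have hden : (-1:ℂ)^(n-k) * x3 * Y * ((-1)^(n+k+1) * x4 * Z) = -(x3 * x4 * (Y * Z)) := by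
    linear_combination (x3 * x4 * Y * Z) * hsign
  rw [hden, div_neg, ← neg_div]
  have hnum : -(c * x1 * (-x2 * u)) = c * (x1 * x2) * u := by ring
  rw [hnum, hx]
  field_simp

theorem stmt17 (q : ℂ) (hq0 : q ≠ 0) (hq : ∀ k : ℕ, 1 ≤ k → q ^ k ≠ 1) (p : ℤ) (n : ℕ) :
    cpn p n (1/q) = (-1 : ℂ) ^ n * q ^ (n*(n+3)/2) * cpn (-p) n q := by
  have hP : ∀ m, qPoch q q m ≠ 0 := qPoch_ne_zero q hq
  unfold cpn
  have hsum : ∀ k ∈ Finset.range (n+1),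
      (-1 : ℂ) ^ k * (1/q) ^ (((k*(k-1)/2 : ℕ) : ℤ) + p * ((k : ℤ)^2 + (k : ℤ))) *
        (1 - (1/q) ^ (2*k+1)) / (qPoch (1/q) (1/q) (n-k) * qPoch (1/q) (1/q) (n+k+1))
      = q ^ (((n*(n+3)/2 : ℕ) : ℤ) + ((n*(n+1)/2 : ℕ) : ℤ)) *
        ((-1 : ℂ) ^ k * q ^ (((k*(k-1)/2 : ℕ) : ℤ) + (-p) * ((k : ℤ)^2 + (k : ℤ))) *
          (1 - q ^ (2*k+1)) / (qPoch q q (n-k) * qPoch q q (n+k+1))) := by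
    intro k hk
    have hkn : k ≤ n := Nat.lt_succ_iff.mp (Finset.mem_range.mp hk)
    rw [qPoch_one_div q hq0 (n-k), qPoch_one_div q hq0 (n+k+1)]
    simp only [one_div, inv_zpow', inv_pow]
    have hu : (1:ℂ) - (q^(2*k+1))⁻¹ = -(q ^ (-((2*k+1 : ℕ) : ℤ))) * (1 - q^(2*k+1)) := by
      have hpw : (q:ℂ)^(2*k+1) ≠ 0 := pow_ne_zero _ hq0
      rw [zpow_neg, zpow_natCast]
      field_simp
      ring
    rw [hu]
    refine key _ _ _ _ _ _ _ _ _ _ n k hkn (zpow_ne_zero _ hq0) (zpow_ne_zero _ hq0)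
      (hP _) (hP _) ?_
    rw [← zpow_add₀ hq0, ← zpow_add₀ hq0, ← zpow_add₀ hq0, ← zpow_add₀ hq0]
    congr 1
    have h1 := tri_cast (n-k)
    have h2 := tri_cast (n+k+1)
    have h3 := tri_cast' k
    have h4 := tri_cast n
    have h5 : ((n*(n+3)/2 : ℕ) : ℤ) * 2 = (n:ℤ) * ((n:ℤ)+3) := by
      have e1 : n*(n+3) = n*(n+1) + 2*n := by ring
      obtain ⟨t, ht⟩ := Nat.even_mul_succ_self n
      have e2 : n*(n+3)/2 = n*(n+1)/2 + n := by omega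
      rw [e2, Nat.cast_add]
      linarith [tri_cast n]
    rw [Nat.cast_sub hkn] at h1
    have hc1 : ((n+k+1 : ℕ) : ℤ) = (n:ℤ)+k+1 := by push_cast; ring
    rw [hc1] at h2
    have h6 : ((2*k+1 : ℕ) : ℤ) = 2*(k:ℤ)+1 := by push_cast; ring
    rw [h6]
    linarith
  rw [Finset.sum_congr rfl hsum, ← Finset.mul_sum, qPoch_one_div q hq0 n]
  have hfin : q ^ (-((n*(n+1)/2 : ℕ) : ℤ)) * q ^ (((n*(n+3)/2 : ℕ) : ℤ) + ((n*(n+1)/2 : ℕ) : ℤ))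
      = q ^ (n*(n+3)/2) := by
    rw [← zpow_natCast q (n*(n+3)/2), ← zpow_add₀ hq0]
    congr 1
    ring
  rw [← hfin]
  ring
end
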